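/- arXiv:2012.10081 — 7 statements merged into one kernel-verified Lean document; each statement's English description precedes it below -/
import Mathlib

section
/- Roos bound for constacyclic codes: Let N and M be nonempty subsets of Ω, and let d_N be a positive integer such that every nonzero codeword of D_N has Hamming weight at least d_N. Define MN = { εη/α : ε ∈ M, η ∈ N } (a subset of Ω). If there exists a consecutive subset M′ of Ω with M ⊆ M′ and |M′| ≤ |M| + d_N − 2, then every nonzero codeword of D_{MN} has Hamming weight at least |M| + d_N − 1. -/
/-!
Fix a nonzero codeword `c` of `D_{MN}` with support `S` and let `V(A)` be the span of the vectors
`(c_k (ε/α)^k)_k`, `ε ∈ A` (`twistSpan c α A`). Such a vector evaluated at `η` is `c(εη/α)`, so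
for `A = M` all of `V(M)` lies in `D_N`: it is a code supported on `S` of minimum distance
`≥ d_N`, and the Singleton bound gives `dim V(M) ≤ |S| - d_N + 1`. Since `M'` is a progression
`αξ^(e+zn)` with `ξ^n` a primitive `m`-th root, the vectors for `ε ∈ M'` restricted to `S` are
Vandermonde columns, so `min(|M'|, |S|) ≤ dim V(M') ≤ dim V(M) + |M'| - |M|`. Together with
`|M'| ≤ |M| + d_N - 2` this forces `|S| ≥ |M| + d_N - 1`.
-/

open Polynomial

open scoped Classical in
/-- Hamming weight: the number of nonzero coordinates. -/
noncomputable def wt {ι K : Type*} [Fintype ι] [Zero K] (c : ι → K) : ℕ :=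
  (Finset.univ.filter fun i => c i ≠ 0).card

/-- The λ-constacyclic code of length `m` over `F` with zero set `P`. -/
def Dcode {F : Type*} [Field F] (m : ℕ) (P : Set F) : Set (Fin m → F) :=
  {c | ∀ β ∈ P, ∑ k : Fin m, c k * β ^ (k : ℕ) = 0}

/-- A consecutive subset of Ω: `{αξ^(e+zn) : 0 ≤ z ≤ δ-2}` with `gcd(m,n) = 1`. -/
def IsConsecutive {F : Type*} [Field F] (m : ℕ) (α ξ : F) (E : Set F) : Prop :=
  ∃ e δ n : ℕ, 2 ≤ δ ∧ 0 < n ∧ Nat.Coprime m n ∧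
    E = {x | ∃ z < δ - 1, x = α * ξ ^ (e + z * n)}

open Module

theorem wt_eq_hammingNorm {ι K : Type*} [Fintype ι] [Zero K] [DecidableEq K] (v : ι → K) :
    wt v = hammingNorm v := by
  unfold wt hammingNorm
  congr!

theorem wt_le_card_of_eq_zero {ι K : Type*} [Fintype ι] [Zero K] {v : ι → K} {T : Finset ι}
    (hv : ∀ i ∉ T, v i = 0) : wt v ≤ T.card := by
  classical
  rw [wt_eq_hammingNorm]
  exact Finset.card_le_card fun i hi => by_contra fun hiT => (Finset.mem_filter.mp hi).2 (hv i hiT)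

/-- Singleton bound: deleting `d - 1` coordinates of `S` is injective on `W`. -/
theorem finrank_le_card_sub_of_le_wt {K ι : Type*} [Field K] [Fintype ι]
    {W : Submodule K (ι → K)} {S : Finset ι} {d : ℕ} (hS : ∀ v ∈ W, ∀ i ∉ S, v i = 0)
    (hd : ∀ v ∈ W, v ≠ 0 → d ≤ wt v) : finrank K W ≤ S.card - (d - 1) := by
  classical
  obtain ⟨T, hTS, hT⟩ := Finset.exists_subset_card_eq (min_le_right (d - 1) S.card)
  let restrict : W →ₗ[K] ((S \ T : Finset ι) → K) :=
    (LinearMap.funLeft K K Subtype.val).comp W.subtype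
  have hinj : Function.Injective restrict := by
    rw [← LinearMap.ker_eq_bot, LinearMap.ker_eq_bot']
    rintro ⟨v, hvW⟩ hv
    have hvT : ∀ i ∉ T, v i = 0 := fun i hiT => by
      by_cases hiS : i ∈ S
      · exact congrFun hv ⟨i, Finset.mem_sdiff.mpr ⟨hiS, hiT⟩⟩
      · exact hS v hvW i hiS
    by_contra hv0
    have hv0' : v ≠ 0 := fun h => hv0 (Subtype.ext h)
    have hpos : 0 < wt v := by rw [wt_eq_hammingNorm]; exact hammingNorm_pos_iff.mpr hv0'
    have := hd v hvW hv0'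
    have := wt_le_card_of_eq_zero hvT
    omega
  calc finrank K W ≤ finrank K ((S \ T : Finset ι) → K) :=
        LinearMap.finrank_le_finrank_of_injective hinj
    _ = S.card - (d - 1) := by
        rw [finrank_fintype_fun_eq_card, Fintype.card_coe, Finset.card_sdiff_of_subset hTS, hT]
        omega

theorem linearIndependent_mul_pow {K ι : Type*} [Field K] {w x : ι → K} {T : Finset ι}
    (hw : ∀ i ∈ T, w i ≠ 0) (hx : Set.InjOn x T) {t : ℕ} (ht : t ≤ T.card) :
    LinearIndependent K fun z : Fin t => fun i => w i * x i ^ (z : ℕ) := by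
  rw [Fintype.linearIndependent_iff]
  intro a ha
  let s : Fin t ↪ T := (Fin.castLEEmb ht).trans T.equivFin.symm.toEmbedding
  refine congrFun (Matrix.eq_zero_of_forall_index_sum_mul_pow_eq_zero (f := fun j => x (s j))
    (fun j k h => s.injective (Subtype.ext (hx (s j).2 (s k).2 h))) fun j => ?_)
  have h := congrFun ha (s j)
  simp only [Finset.sum_apply, Pi.smul_apply, smul_eq_mul, Pi.zero_apply] at h
  refine (mul_eq_zero.mp ?_).resolve_left (hw _ (s j).2)
  rw [Finset.mul_sum, ← h]
  exact Finset.sum_congr rfl fun z _ => by ring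

theorem finrank_span_image_le_add_ncard_diff {K V α : Type*} [Field K] [AddCommGroup V]
    [Module K V] (f : α → V) {A B : Set α} (hAB : A ⊆ B) (hB : B.Finite) :
    finrank K (Submodule.span K (f '' B)) ≤
      finrank K (Submodule.span K (f '' A)) + (B.ncard - A.ncard) := by
  have hD : (B \ A).Finite := hB.sdiff
  have : FiniteDimensional K (Submodule.span K (f '' A)) :=
    FiniteDimensional.span_of_finite K ((hB.subset hAB).image f)
  have : FiniteDimensional K (Submodule.span K (f '' (B \ A))) :=
    FiniteDimensional.span_of_finite K (hD.image f)
  have hsplit : Submodule.span K (f '' B) =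
      Submodule.span K (f '' A) ⊔ Submodule.span K (f '' (B \ A)) := by
    rw [← Submodule.span_union, ← Set.image_union, Set.union_sdiff_cancel hAB]
  have hdiff : finrank K (Submodule.span K (f '' (B \ A))) ≤ B.ncard - A.ncard := by
    have := (hD.image f).fintype
    calc finrank K (Submodule.span K (f '' (B \ A))) ≤ (f '' (B \ A)).toFinset.card :=
          finrank_span_le_card _
      _ = (f '' (B \ A)).ncard := (Set.ncard_eq_toFinset_card' _).symm
      _ ≤ (B \ A).ncard := Set.ncard_image_le hD
      _ = B.ncard - A.ncard := Set.ncard_sdiff hAB (hB.subset hAB)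
  rw [hsplit]
  exact (Submodule.finrank_add_le_finrank_add_finrank _ _).trans (Nat.add_le_add_left hdiff _)

theorem setOf_exists_lt_eq_coe_image {β : Type*} [DecidableEq β] (f : ℕ → β) (s : ℕ) :
    {x | ∃ z < s, x = f z} = ↑((Finset.range s).image f) := by
  ext x
  simp [eq_comm]

section Constacyclic

variable {F : Type*} [Field F] {m : ℕ}

def twistSpan (c : Fin m → F) (α : F) (A : Set F) : Submodule F (Fin m → F) :=
  Submodule.span F ((fun ε k => c k * (ε / α) ^ (k : ℕ)) '' A)

variable {c : Fin m → F} {α : F} {A : Set F}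

theorem apply_eq_zero_of_mem_twistSpan {v : Fin m → F} (hv : v ∈ twistSpan c α A) {k : Fin m}
    (hk : c k = 0) : v k = 0 := by
  induction hv using Submodule.span_induction with
  | mem x hx =>
    obtain ⟨ε, -, rfl⟩ := hx
    simp [hk]
  | zero => rfl
  | add x y _ _ hx hy => simp [hx, hy]
  | smul a x _ hx => simp [hx]

theorem mem_Dcode_of_mem_twistSpan {P Q : Set F} (hc : c ∈ Dcode m Q)
    (hQ : ∀ ε ∈ A, ∀ η ∈ P, ε * η / α ∈ Q) {v : Fin m → F} (hv : v ∈ twistSpan c α A) :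
    v ∈ Dcode m P := by
  induction hv using Submodule.span_induction with
  | mem x hx =>
    obtain ⟨ε, hε, rfl⟩ := hx
    intro η hη
    rw [← hc _ (hQ ε hε η hη)]
    refine Finset.sum_congr rfl fun k _ => ?_
    rw [mul_div_right_comm, mul_pow]
    ring
  | zero => intro η _; simp
  | add x y _ _ hx hy =>
    intro η hη
    simp only [Pi.add_apply, add_mul, Finset.sum_add_distrib, hx η hη, hy η hη, add_zero]
  | smul a x _ hx =>
    intro η hη
    simp only [Pi.smul_apply, smul_eq_mul, mul_assoc, ← Finset.mul_sum, hx η hη, mul_zero]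

theorem finrank_twistSpan_le_wt_sub {P Q : Set F} {d : ℕ}
    (hd : ∀ v ∈ Dcode m P, v ≠ 0 → d ≤ wt v) (hc : c ∈ Dcode m Q)
    (hQ : ∀ ε ∈ A, ∀ η ∈ P, ε * η / α ∈ Q) :
    finrank F (twistSpan c α A) ≤ wt c - (d - 1) := by
  classical
  rw [wt_eq_hammingNorm]
  exact finrank_le_card_sub_of_le_wt
    (fun v hv k hk => apply_eq_zero_of_mem_twistSpan hv (by simpa using hk))
    fun v hv => hd v (mem_Dcode_of_mem_twistSpan hc hQ hv)

theorem one_le_finrank_twistSpan (hc : c ≠ 0) (hα : α ≠ 0) {ε : F} (hε : ε ∈ A) (hε0 : ε ≠ 0) :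
    1 ≤ finrank F (twistSpan c α A) := by
  obtain ⟨k, hk⟩ := Function.ne_iff.mp hc
  refine Submodule.one_le_finrank_iff.mpr <| (Submodule.ne_bot_iff _).mpr
    ⟨_, Submodule.subset_span ⟨ε, hε, rfl⟩, fun h => ?_⟩
  exact mul_ne_zero hk (pow_ne_zero _ (div_ne_zero hε0 hα)) (congrFun h k)

theorem finrank_twistSpan_le_add_ncard_diff {B : Set F} (hAB : A ⊆ B) (hB : B.Finite) :
    finrank F (twistSpan c α B) ≤ finrank F (twistSpan c α A) + (B.ncard - A.ncard) :=
  finrank_span_image_le_add_ncard_diff _ hAB hB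

namespace IsConsecutive

variable {ξ : F} {E : Set F}

theorem finite (hE : IsConsecutive m α ξ E) : E.Finite := by
  classical
  obtain ⟨e, δ, n, -, -, -, rfl⟩ := hE
  rw [setOf_exists_lt_eq_coe_image]
  exact Finset.finite_toSet _

theorem ne_zero_of_mem (hE : IsConsecutive m α ξ E) (hα : α ≠ 0) (hξ : ξ ≠ 0) {x : F}
    (hx : x ∈ E) : x ≠ 0 := by
  obtain ⟨e, δ, n, -, -, -, rfl⟩ := hE
  obtain ⟨z, -, rfl⟩ := hx
  exact mul_ne_zero hα (pow_ne_zero _ hξ)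

theorem min_ncard_wt_le_finrank_twistSpan (hE : IsConsecutive m α ξ E) (hm : 0 < m)
    (hα : α ≠ 0) (hξ : IsPrimitiveRoot ξ m) (c : Fin m → F) :
    min E.ncard (wt c) ≤ finrank F (twistSpan c α E) := by
  classical
  obtain ⟨e, δ, n, -, -, hmn, rfl⟩ := hE
  have hξ0 : ξ ≠ 0 := hξ.ne_zero hm.ne'
  have hξn : IsPrimitiveRoot (ξ ^ n) m := hξ.pow_of_coprime n hmn.symm
  set t := min (δ - 1) (wt c)
  have hli : LinearIndependent F fun z : Fin t => fun k : Fin m =>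
      c k * (ξ ^ e) ^ (k : ℕ) * ((ξ ^ n) ^ (k : ℕ)) ^ (z : ℕ) :=
    linearIndependent_mul_pow (T := {k | c k ≠ 0})
      (fun k hk => mul_ne_zero (Finset.mem_filter.mp hk).2 (pow_ne_zero _ (pow_ne_zero _ hξ0)))
      (fun i _ j _ h => Fin.ext (hξn.pow_inj i.isLt j.isLt h))
      ((min_le_right _ _).trans_eq (wt_eq_hammingNorm c))
  have hrange : Set.range (fun z : Fin t => fun k : Fin m =>
      c k * (ξ ^ e) ^ (k : ℕ) * ((ξ ^ n) ^ (k : ℕ)) ^ (z : ℕ)) ⊆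
      twistSpan c α {x | ∃ z < δ - 1, x = α * ξ ^ (e + z * n)} := by
    rintro _ ⟨z, rfl⟩
    refine Submodule.subset_span ⟨α * ξ ^ (e + z * n), ⟨z, z.2.trans_le (min_le_left _ _), rfl⟩, ?_⟩
    funext k
    dsimp only
    rw [mul_div_cancel_left₀ _ hα]
    ring
  have hncard : {x | ∃ z < δ - 1, x = α * ξ ^ (e + z * n)}.ncard ≤ δ - 1 := by
    rw [setOf_exists_lt_eq_coe_image, Set.ncard_coe_finset]
    exact Finset.card_image_le.trans (Finset.card_range _).le
  calc min _ (wt c) ≤ t := min_le_min_right _ hncard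
    _ = finrank F (Submodule.span F (Set.range _)) := by
        rw [finrank_span_eq_card hli, Fintype.card_fin]
    _ ≤ _ := Submodule.finrank_mono (Submodule.span_le.mpr hrange)

end IsConsecutive

end Constacyclic

theorem roos_bound_general
    {Fq F : Type*} [Field Fq] [Fintype Fq] [Field F]
    (m : ℕ) (hm : 0 < m)
    (lam : Fq) (hlam : lam ≠ 0)
    (r : ℕ) (hr : orderOf lam = r)
    (α : F) (hα : IsPrimitiveRoot α (r * m))
    (M N : Set F) (hM : M.Nonempty)
    (dN : ℕ)
    (hDN : ∀ c ∈ Dcode m N, c ≠ 0 → dN ≤ wt c)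
    (MN : Set F) (hMN : MN = {x : F | ∃ ε ∈ M, ∃ η ∈ N, x = ε * η / α})
    (M' : Set F) (hM'cons : IsConsecutive m α (α ^ r) M')
    (hMM' : M ⊆ M') (hcard : M'.ncard ≤ M.ncard + dN - 2) :
    ∀ c ∈ Dcode m MN, c ≠ 0 → M.ncard + dN - 1 ≤ wt c := by
  subst hMN
  intro c hc hc0
  have hrm : 0 < r * m := Nat.mul_pos (hr ▸ hlam.isUnit.isOfFinOrder.orderOf_pos) hm
  have hα0 : α ≠ 0 := hα.ne_zero hrm.ne'
  have hξ : IsPrimitiveRoot (α ^ r) m := hα.pow hrm rfl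
  have hM'fin := hM'cons.finite
  have hMpos : 0 < M.ncard := (Set.ncard_pos (hM'fin.subset hMM')).mpr hM
  have hMM'card := Set.ncard_le_ncard hMM' hM'fin
  obtain ⟨ε, hε⟩ := hM
  have hpos := one_le_finrank_twistSpan hc0 hα0 hε
    (hM'cons.ne_zero_of_mem hα0 (hξ.ne_zero hm.ne') (hMM' hε))
  have hupper := finrank_twistSpan_le_wt_sub (A := M) hDN hc
    fun ε hε η hη => ⟨ε, hε, η, hη, rfl⟩
  have hgrowth := finrank_twistSpan_le_add_ncard_diff (c := c) (α := α) hMM' hM'fin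
  have hlower := hM'cons.min_ncard_wt_le_finrank_twistSpan hm hα0 hξ c
  omega

theorem roos_bound
    {Fq F : Type*} [Field Fq] [Fintype Fq] [Field F] [Algebra Fq F]
    (m : ℕ) (hm : 0 < m) (hcop : Nat.Coprime m (Fintype.card Fq))
    (lam : Fq) (hlam : lam ≠ 0)
    (r : ℕ) (hr : orderOf lam = r)
    (hsplit : IsSplittingField Fq F (X ^ m - C lam))
    (α : F) (hα : IsPrimitiveRoot α (r * m))
    (hαm : α ^ m = algebraMap Fq F lam)
    (Ω : Set F) (hΩ : Ω = {x : F | ∃ k < m, x = α * (α ^ r) ^ k})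
    (M N : Set F) (hM : M.Nonempty) (hN : N.Nonempty)
    (hMΩ : M ⊆ Ω) (hNΩ : N ⊆ Ω)
    (dN : ℕ) (hdN : 0 < dN)
    (hDN : ∀ c ∈ Dcode m N, c ≠ 0 → dN ≤ wt c)
    (MN : Set F) (hMN : MN = {x : F | ∃ ε ∈ M, ∃ η ∈ N, x = ε * η / α})
    (M' : Set F) (hM'cons : IsConsecutive m α (α ^ r) M')
    (hMM' : M ⊆ M') (hcard : M'.ncard ≤ M.ncard + dN - 2) :
    ∀ c ∈ Dcode m MN, c ≠ 0 → M.ncard + dN - 1 ≤ wt c :=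
  roos_bound_general m hm lam hlam r hr α hα M N hM dN hDN MN hMN M' hM'cons hMM' hcard
end

section
/- Roos bound with consecutive N: Let N and M be nonempty subsets of Ω with N consecutive, and define MN = { εη/α : ε ∈ M, η ∈ N } ⊆ Ω. If there exists a consecutive subset M′ of Ω with M ⊆ M′ and |M′| < |M| + |N|, then every nonzero codeword of D_{MN} has Hamming weight at least |M| + |N|. -/
/-! Restrict a nonzero codeword `c` to its support `S`. For `ε ∈ M` and `η ∈ N` the vectors
`(ε ^ i)_{i ∈ S}` and `(c_i (η / α) ^ i)_{i ∈ S}` are orthogonal, their dot product being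
`c(εη/α) = 0`, so the spans `V_M` and `W_N` of the two families satisfy
`dim V_M + dim W_N ≤ |S|`. A consecutive set `E` is a geometric progression, so by Vandermonde
the span of its family has dimension at least `min(|E|, |S|)`. Applied to `N` and to `M'`, with
`dim V_{M'} ≤ dim V_M + |M' \ M|` and `dim V_M ≥ 1`, the hypothesis `|M'| < |M| + |N|` leaves
only `|S| ≥ |M| + |N|`. -/

open Polynomial

open Module Submodule

section LinearAlgebra

variable {F ι : Type*} [Field F] [Fintype ι]

theorem linearIndependent_mul_pow_s1 {x d : ι → F} (hx : Function.Injective x) (hd : ∀ i, d i ≠ 0)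
    {t : ℕ} (ht : t ≤ Fintype.card ι) :
    LinearIndependent F (fun z : Fin t => fun i => d i * x i ^ (z : ℕ)) := by
  classical
  rw [Fintype.linearIndependent_iff]
  intro g hg
  have heval : ∀ i, (ofFn t g).eval (x i) = 0 := fun i => by
    have hgi := congrFun hg i
    simp only [Finset.sum_apply, Pi.smul_apply, smul_eq_mul, Pi.zero_apply] at hgi
    rw [ofFn_eq_sum_monomial, eval_finsetSum]
    simp only [eval_monomial]
    refine (mul_eq_zero.1 ?_).resolve_left (hd i)
    rw [Finset.mul_sum, ← hgi]
    exact Finset.sum_congr rfl fun z _ => by ring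
  have hp : ofFn t g = 0 := by
    rcases Nat.eq_zero_or_pos t with rfl | htpos
    · exact ofFn_zero' g
    exact eq_zero_of_natDegree_lt_card_of_eval_eq_zero _ hx heval
      ((ofFn_natDegree_lt htpos g).trans_le ht)
  intro z
  simpa using congrArg (coeff · z) hp

theorem finrank_span_add_finrank_span_le_card {s t : Set (ι → F)}
    (h : ∀ x ∈ s, ∀ y ∈ t, x ⬝ᵥ y = 0) :
    finrank F (span F s) + finrank F (span F t) ≤ Fintype.card ι := by
  classical
  let e := dotProductEquiv F ι
  have hle : (span F t).map e.toLinearMap ≤ (span F s).dualAnnihilator := by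
    rw [Submodule.map_le_iff_le_comap, span_le]
    intro y hy
    rw [SetLike.mem_coe, mem_comap, mem_dualAnnihilator]
    intro w hw
    have hs : span F s ≤ LinearMap.ker (e y) := span_le.2 fun x hx => by
      simp [e, dotProduct_comm y x, h x hx y hy]
    exact hs hw
  have h1 := Submodule.finrank_mono hle
  rw [LinearEquiv.finrank_map_eq] at h1
  have h2 := Subspace.finrank_add_finrank_dualAnnihilator_eq (span F s)
  rw [Module.finrank_fintype_fun_eq_card] at h2
  omega

theorem finrank_span_image_le_ncard {K V : Type*} [AddCommGroup V] [Module F V] (u : K → V)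
    {T : Set K} (hT : T.Finite) : finrank F (span F (u '' T)) ≤ T.ncard := by
  classical
  have himage : u '' T = ↑(hT.toFinset.image u) := by simp
  rw [Set.ncard_eq_toFinset_card T hT, himage]
  exact (finrank_span_finset_le_card _).trans Finset.card_image_le

theorem ncard_add_ncard_le_card_of_dotProduct_eq_zero {K : Type*} {u v : K → ι → F}
    {M M' N : Set K} (hMM' : M ⊆ M') (hM' : M'.Finite) (hu : ∃ ε ∈ M, u ε ≠ 0)
    (horth : ∀ ε ∈ M, ∀ η ∈ N, u ε ⬝ᵥ v η = 0)
    (hM'rank : min M'.ncard (Fintype.card ι) ≤ finrank F (span F (u '' M')))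
    (hNrank : min N.ncard (Fintype.card ι) ≤ finrank F (span F (v '' N)))
    (hcard : M'.ncard < M.ncard + N.ncard) :
    M.ncard + N.ncard ≤ Fintype.card ι := by
  have hMrank_pos : 1 ≤ finrank F (span F (u '' M)) := by
    obtain ⟨ε, hε, hu0⟩ := hu
    rw [← finrank_span_singleton (K := F) hu0]
    exact Submodule.finrank_mono (span_mono (Set.singleton_subset_iff.2 ⟨ε, hε, rfl⟩))
  have hM'rank_le : finrank F (span F (u '' M')) ≤
      finrank F (span F (u '' M)) + (M' \ M).ncard := by
    have himage : u '' M' = u '' M ∪ u '' (M' \ M) := by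
      rw [← Set.image_union, Set.union_sdiff_cancel hMM']
    rw [himage, span_union]
    have h1 := finrank_add_le_finrank_add_finrank (span F (u '' M)) (span F (u '' (M' \ M)))
    have h2 := finrank_span_image_le_ncard (F := F) u (hM'.sdiff (t := M))
    omega
  have hdiff : (M' \ M).ncard = M'.ncard - M.ncard := Set.ncard_sdiff hMM' (hM'.subset hMM')
  have hMM'card : M.ncard ≤ M'.ncard := Set.ncard_le_ncard hMM' hM'
  have hsum := finrank_span_add_finrank_span_le_card (s := u '' M) (t := v '' N) <| by
    rintro _ ⟨ε, hε, rfl⟩ _ ⟨η, hη, rfl⟩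
    exact horth ε hε η hη
  omega

end LinearAlgebra

section PowerVector

variable {F ι : Type*} [Field F]

def powerVector (k : ι → ℕ) (d : ι → F) (β : F) : ι → F := fun i => d i * β ^ k i

theorem powerVector_ne_zero [Nonempty ι] {k : ι → ℕ} {d : ι → F} (hd : ∀ i, d i ≠ 0) {β : F}
    (hβ : β ≠ 0) : powerVector k d β ≠ 0 := fun h => by
  obtain ⟨i⟩ := ‹Nonempty ι›
  exact mul_ne_zero (hd i) (pow_ne_zero _ hβ) (congrFun h i)

variable [Fintype ι]

theorem powerVector_dotProduct (k : ι → ℕ) (d d' : ι → F) (β β' : F) :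
    powerVector k d β ⬝ᵥ powerVector k d' β' = ∑ i, d i * d' i * (β * β') ^ k i :=
  Finset.sum_congr rfl fun i _ => by simp only [powerVector, mul_pow]; ring

theorem min_ncard_le_finrank_span_powerVector_of_geometric {k : ι → ℕ} {d : ι → F}
    (hd : ∀ i, d i ≠ 0) {a b : F} (ha : a ≠ 0) (hb : Function.Injective fun i => b ^ k i)
    (t : ℕ) :
    min ((fun z => a * b ^ z) '' Set.Iio t).ncard (Fintype.card ι) ≤
      finrank F (span F (powerVector k d '' ((fun z => a * b ^ z) '' Set.Iio t))) := by
  set s := min t (Fintype.card ι)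
  have hind := linearIndependent_mul_pow_s1 hb (fun i => mul_ne_zero (hd i) (pow_ne_zero (k i) ha))
    (min_le_right t (Fintype.card ι))
  have hfamily : (fun z : Fin s => fun i => d i * a ^ k i * (b ^ k i) ^ (z : ℕ)) =
      fun z : Fin s => powerVector k d (a * b ^ (z : ℕ)) := by
    funext z i
    simp only [powerVector, mul_pow, ← pow_mul]
    ring
  rw [hfamily] at hind
  have hrange : Set.range (fun z : Fin s => powerVector k d (a * b ^ (z : ℕ))) ⊆
      powerVector k d '' ((fun z => a * b ^ z) '' Set.Iio t) := by
    rintro _ ⟨z, rfl⟩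
    exact ⟨_, ⟨z, lt_of_lt_of_le z.isLt (min_le_left _ _), rfl⟩, rfl⟩
  have hcard : ((fun z => a * b ^ z) '' Set.Iio t).ncard ≤ t :=
    (Set.ncard_image_le (Set.finite_Iio t)).trans (Set.ncard_Iio_nat t).le
  calc min ((fun z => a * b ^ z) '' Set.Iio t).ncard (Fintype.card ι) ≤ s := by omega
    _ = finrank F (span F (Set.range _)) := by rw [finrank_span_eq_card hind, Fintype.card_fin]
    _ ≤ _ := Submodule.finrank_mono (span_mono hrange)

end PowerVector

section Consecutive

variable {F : Type*} [Field F] {m : ℕ} {α ξ : F} {E : Set F}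

theorem IsConsecutive.exists_eq_image (hE : IsConsecutive m α ξ E) :
    ∃ e n t : ℕ, m.Coprime n ∧ E = (fun z => α * ξ ^ e * (ξ ^ n) ^ z) '' Set.Iio t := by
  obtain ⟨e, δ, n, -, -, hmn, rfl⟩ := hE
  refine ⟨e, n, δ - 1, hmn, ?_⟩
  ext x
  simp only [Set.mem_ofPred_eq, Set.mem_image, Set.mem_Iio, pow_add, ← pow_mul, mul_assoc,
    mul_comm n]
  exact ⟨fun ⟨z, hz, hx⟩ => ⟨z, hz, hx.symm⟩, fun ⟨z, hz, hx⟩ => ⟨z, hz, hx.symm⟩⟩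

theorem IsConsecutive.finite_s1 (hE : IsConsecutive m α ξ E) : E.Finite := by
  obtain ⟨e, n, t, -, rfl⟩ := hE.exists_eq_image
  exact (Set.finite_Iio t).image _

theorem IsConsecutive.ne_zero_of_mem_s1 (hE : IsConsecutive m α ξ E) (hα : α ≠ 0) (hξ : ξ ≠ 0)
    {x : F} (hx : x ∈ E) : x ≠ 0 := by
  obtain ⟨e, n, t, -, rfl⟩ := hE.exists_eq_image
  obtain ⟨z, -, rfl⟩ := hx
  exact mul_ne_zero (mul_ne_zero hα (pow_ne_zero _ hξ)) (pow_ne_zero _ (pow_ne_zero _ hξ))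

theorem IsConsecutive.min_ncard_le_finrank_span_powerVector {ι : Type*} [Fintype ι]
    (hE : IsConsecutive m α ξ E) (hα : α ≠ 0) (hξ : IsPrimitiveRoot ξ m) {k : ι → ℕ}
    (hk : Function.Injective k) (hkm : ∀ i, k i < m) {d : ι → F} (hd : ∀ i, d i ≠ 0) :
    min E.ncard (Fintype.card ι) ≤ finrank F (span F (powerVector k d '' E)) := by
  rcases isEmpty_or_nonempty ι with hι | ⟨⟨i⟩⟩
  · simp
  have hξ0 : ξ ≠ 0 := hξ.ne_zero (hkm i).ne_bot
  obtain ⟨e, n, t, hmn, rfl⟩ := hE.exists_eq_image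
  refine min_ncard_le_finrank_span_powerVector_of_geometric hd
    (mul_ne_zero hα (pow_ne_zero _ hξ0)) (fun i j hij => hk ?_) t
  exact (hξ.pow_of_coprime n hmn.symm).pow_inj (hkm i) (hkm j) hij

end Consecutive

open scoped Classical in
theorem wt_eq_card_subtype {ι K : Type*} [Fintype ι] [Zero K] (c : ι → K) :
    wt c = Fintype.card {i // c i ≠ 0} := by
  rw [wt, Fintype.card_subtype]

open scoped Classical in
theorem sum_support_mul_pow_eq_zero_of_mem_Dcode {F : Type*} [Field F] {m : ℕ} {P : Set F}
    {c : Fin m → F} (hc : c ∈ Dcode m P) {β : F} (hβ : β ∈ P) :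
    ∑ i : {i // c i ≠ 0}, c i * β ^ (i : ℕ) = 0 := by
  rw [← Finset.sum_subtype (Finset.univ.filter fun i => c i ≠ 0) (by simp)
    fun i => c i * β ^ (i : ℕ), Finset.sum_filter_of_ne fun i _ hi => left_ne_zero_of_mul hi]
  exact hc β hβ

theorem roos_bound_consecutive_general
    {Fq F : Type*} [Field Fq] [Fintype Fq] [Field F]
    (m : ℕ) (hm : 0 < m)
    (lam : Fq) (hlam : lam ≠ 0)
    (r : ℕ) (hr : orderOf lam = r)
    (α : F) (hα : IsPrimitiveRoot α (r * m))
    (M N : Set F) (hM : M.Nonempty)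
    (hNcons : IsConsecutive m α (α ^ r) N)
    (MN : Set F) (hMN : MN = {x : F | ∃ ε ∈ M, ∃ η ∈ N, x = ε * η / α})
    (M' : Set F) (hM'cons : IsConsecutive m α (α ^ r) M')
    (hMM' : M ⊆ M') (hcard : M'.ncard < M.ncard + N.ncard) :
    ∀ c ∈ Dcode m MN, c ≠ 0 → M.ncard + N.ncard ≤ wt c := by
  classical
  intro c hc hc0
  have hr0 : 0 < r := by
    rw [← hr, ← Units.val_mk0 hlam, orderOf_units]
    exact orderOf_pos _
  have hα0 : α ≠ 0 := hα.ne_zero (Nat.mul_pos hr0 hm).ne'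
  have hξ : IsPrimitiveRoot (α ^ r) m := hα.pow (Nat.mul_pos hr0 hm) rfl
  let k : {i : Fin m // c i ≠ 0} → ℕ := fun i => i.1
  have hk : Function.Injective k := Fin.val_injective.comp Subtype.val_injective
  have hkm : ∀ i, k i < m := fun i => i.1.isLt
  obtain ⟨i₀, hi₀⟩ := Function.ne_iff.1 hc0
  have : Nonempty {i : Fin m // c i ≠ 0} := ⟨⟨i₀, hi₀⟩⟩
  rw [wt_eq_card_subtype]
  refine ncard_add_ncard_le_card_of_dotProduct_eq_zero (u := powerVector k 1)
    (v := powerVector k fun i => c i * α⁻¹ ^ k i) hMM' hM'cons.finite_s1 ?_ ?_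
    (hM'cons.min_ncard_le_finrank_span_powerVector hα0 hξ hk hkm fun _ => one_ne_zero)
    (hNcons.min_ncard_le_finrank_span_powerVector hα0 hξ hk hkm
      fun i => mul_ne_zero i.2 (pow_ne_zero _ (inv_ne_zero hα0))) hcard
  · obtain ⟨ε, hε⟩ := hM
    exact ⟨ε, hε, powerVector_ne_zero (fun _ => one_ne_zero)
      (hM'cons.ne_zero_of_mem_s1 hα0 (pow_ne_zero r hα0) (hMM' hε))⟩
  · intro ε hε η hη
    have hmem : ε * η / α ∈ MN := hMN ▸ ⟨ε, hε, η, hη, rfl⟩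
    rw [powerVector_dotProduct]
    refine (Finset.sum_congr rfl fun i _ => ?_).trans
      (sum_support_mul_pow_eq_zero_of_mem_Dcode hc hmem)
    simp only [k, Pi.one_apply, div_eq_mul_inv, mul_pow]
    ring

theorem roos_bound_consecutive
    {Fq F : Type*} [Field Fq] [Fintype Fq] [Field F] [Algebra Fq F]
    (m : ℕ) (hm : 0 < m) (hcop : Nat.Coprime m (Fintype.card Fq))
    (lam : Fq) (hlam : lam ≠ 0)
    (r : ℕ) (hr : orderOf lam = r)
    (hsplit : IsSplittingField Fq F (X ^ m - C lam))
    (α : F) (hα : IsPrimitiveRoot α (r * m))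
    (hαm : α ^ m = algebraMap Fq F lam)
    (Ω : Set F) (hΩ : Ω = {x : F | ∃ k < m, x = α * (α ^ r) ^ k})
    (M N : Set F) (hM : M.Nonempty) (hN : N.Nonempty)
    (hMΩ : M ⊆ Ω) (hNΩ : N ⊆ Ω)
    (hNcons : IsConsecutive m α (α ^ r) N)
    (MN : Set F) (hMN : MN = {x : F | ∃ ε ∈ M, ∃ η ∈ N, x = ε * η / α})
    (M' : Set F) (hM'cons : IsConsecutive m α (α ^ r) M')
    (hMM' : M ⊆ M') (hcard : M'.ncard < M.ncard + N.ncard) :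
    ∀ c ∈ Dcode m MN, c ≠ 0 → M.ncard + N.ncard ≤ wt c :=
  roos_bound_consecutive_general m hm lam hlam r hr α hα M N hM hNcons MN hMN M' hM'cons hMM' hcard
end

section
/- Shift bound (van Lint–Wilson): Let K be a field, let f ∈ K[x] be a nonzero polynomial, and let S = { θ ∈ K : f(θ) = 0 } be its set of roots in K. Then for every finite subset A of K that is independent with respect to S, the number of nonzero coefficients of f is at least |A|. -/
open Polynomial

/-- Finite subsets of `K` independent with respect to `S` (van Lint–Wilson). -/
inductive IndepWith {K : Type*} [Field K] [DecidableEq K] (S : Set K) : Finset K → Prop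
  | empty : IndepWith S ∅
  | extend {A : Finset K} {b : K} : IndepWith S A → (A : Set K) ⊆ S → b ∉ S →
      IndepWith S (insert b A)
  | scale {A : Finset K} {c : K} : IndepWith S A → c ≠ 0 →
      ((A.image fun a => c * a : Finset K) : Set K) ⊆ S →
      IndepWith S (A.image fun a => c * a)

lemma shift_bound_key {K : Type*} [Field K] [DecidableEq K]
    (f : Polynomial K)
    (S : Set K) (hS : S = {θ : K | Polynomial.eval θ f = 0})
    (A : Finset K) (hA : IndepWith S A) :
    ∀ l : K → K,
      (∑ a ∈ A, l a • (fun i : f.support => a ^ (i : ℕ))) = 0 →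
      ∀ a ∈ A, l a = 0 := by
  induction hA with
  | empty => intro l _ a ha; simp at ha
  | @extend A b _ hAS hbS ih =>
    intro l hsum a ha
    have hbA : b ∉ A := fun h => hbS (hAS h)
    -- pointwise relations
    have hpt : ∀ i ∈ f.support, ∑ x ∈ insert b A, l x * x ^ i = 0 := by
      intro i hi
      have := congrFun hsum ⟨i, hi⟩
      simpa [Finset.sum_apply] using this
    -- pair with the coefficients of f
    have hev : ∑ x ∈ insert b A, l x * Polynomial.eval x f = 0 := by
      have : ∀ x : K, Polynomial.eval x f = ∑ i ∈ f.support, f.coeff i * x ^ i := by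
        intro x
        rw [Polynomial.eval_eq_sum, Polynomial.sum_def]
      calc ∑ x ∈ insert b A, l x * Polynomial.eval x f
          = ∑ x ∈ insert b A, ∑ i ∈ f.support, f.coeff i * (l x * x ^ i) := by
            refine Finset.sum_congr rfl fun x _ => ?_
            rw [this x, Finset.mul_sum]
            exact Finset.sum_congr rfl fun i _ => by ring
        _ = ∑ i ∈ f.support, f.coeff i * ∑ x ∈ insert b A, l x * x ^ i := by
            rw [Finset.sum_comm]
            exact Finset.sum_congr rfl fun i _ => by rw [Finset.mul_sum]
        _ = 0 := by
            refine Finset.sum_eq_zero fun i hi => ?_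
            rw [hpt i hi, mul_zero]
    have hevA : ∀ x ∈ A, Polynomial.eval x f = 0 := fun x hx => by
      have := hAS hx; rw [hS] at this; exact this
    have hevb : Polynomial.eval b f ≠ 0 := fun h => hbS (by rw [hS]; exact h)
    have hlb : l b = 0 := by
      rw [Finset.sum_insert hbA] at hev
      have : ∑ x ∈ A, l x * Polynomial.eval x f = 0 :=
        Finset.sum_eq_zero fun x hx => by rw [hevA x hx, mul_zero]
      rw [this, add_zero] at hev
      exact (mul_eq_zero.mp hev).resolve_right hevb
    rcases Finset.mem_insert.mp ha with rfl | haA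
    · exact hlb
    · refine ih l ?_ a haA
      rw [Finset.sum_insert hbA, hlb, zero_smul, zero_add] at hsum
      exact hsum
  | @scale A c _ hc _ ih =>
    intro l hsum x hx
    have hinj : Set.InjOn (fun a => c * a) A :=
      fun a _ b _ h => mul_left_cancel₀ hc h
    rw [Finset.sum_image hinj] at hsum
    have key : ∀ a ∈ A, l (c * a) = 0 := by
      refine ih (fun a => l (c * a)) ?_
      funext i
      have hpt := congrFun hsum i
      simp only [Finset.sum_apply, Pi.smul_apply, smul_eq_mul, Pi.zero_apply] at hpt ⊢
      have : ∑ a ∈ A, l (c * a) * (c * a) ^ (i : ℕ)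
          = c ^ (i : ℕ) * ∑ a ∈ A, l (c * a) * a ^ (i : ℕ) := by
        rw [Finset.mul_sum]
        exact Finset.sum_congr rfl fun a _ => by ring
      rw [this] at hpt
      exact (mul_eq_zero.mp hpt).resolve_left (pow_ne_zero _ hc)
    rcases Finset.mem_image.mp hx with ⟨a, haA, rfl⟩
    exact key a haA

theorem shift_bound {K : Type*} [Field K] [DecidableEq K]
    (f : Polynomial K) (hf : f ≠ 0)
    (S : Set K) (hS : S = {θ : K | Polynomial.eval θ f = 0})
    (A : Finset K) (hA : IndepWith S A) :
    A.card ≤ f.support.card := by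
  have hli : LinearIndependent K
      (fun a : A => (fun i : f.support => (a : K) ^ (i : ℕ))) := by
    rw [Fintype.linearIndependent_iff]
    intro g hg a
    classical
    set l : K → K := fun x => if h : x ∈ A then g ⟨x, h⟩ else 0 with hl
    have hsum : (∑ x ∈ A, l x • (fun i : f.support => x ^ (i : ℕ))) = 0 := by
      rw [← Finset.sum_attach A (fun x => l x • (fun i : f.support => x ^ (i : ℕ)))]
      rw [← hg]
      exact Finset.sum_congr rfl fun x _ => by simp [hl, x.2]
    have := shift_bound_key f S hS A hA l hsum a a.2
    simpa [hl, a.2] using this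
  have := hli.fintype_card_le_finrank
  simpa [Module.finrank_pi] using this
end

section
/- Jensen bound for quasi-twisted codes: Let C ⊆ F_q^{mℓ} be a nonzero λ-QT code of index ℓ and co-index m. Let i_1,…,i_t be the indices i ∈ {1,…,s} for which the constituent C_i is nonzero, ordered so that d(C_{i_1}) ≤ d(C_{i_2}) ≤ ⋯ ≤ d(C_{i_t}). For each 1 ≤ r ≤ t, let Θ_r be the λ-constacyclic code of length m over F_q with generator polynomial (x^m − λ)/(f_{i_1}(x)⋯f_{i_r}(x)). Then d(C) ≥ min over 1 ≤ r ≤ t of d(C_{i_r})·d(Θ_r). -/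
open Polynomial

/-- Minimum Hamming weight of a nonzero codeword of `S`, with `⊤` for the zero code. -/
noncomputable def minDist {ι K : Type*} [Fintype ι] [Zero K] (S : Set (ι → K)) : ℕ∞ :=
  sInf {n : ℕ∞ | ∃ c ∈ S, c ≠ 0 ∧ (wt c : ℕ∞) = n}

/-- The λ-constashift by ℓ positions on m×ℓ arrays: row 0 becomes λ times old last row. -/
def rho {Fq : Type*} [Field Fq] (m ℓ : ℕ) [NeZero m] (lam : Fq)
    (c : ZMod m × Fin ℓ → Fq) : ZMod m × Fin ℓ → Fq :=
  fun p => (if p.1 = 0 then lam else 1) * c (p.1 - 1, p.2)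

/-- Reduction of a vector of polynomials mod `X^m - λ`, written as an m×ℓ array. -/
noncomputable def arrOf {Fq : Type*} [Field Fq] (m ℓ : ℕ) [NeZero m] (lam : Fq)
    (v : Fin ℓ → Polynomial Fq) : ZMod m × Fin ℓ → Fq :=
  fun p => ((v p.2) %ₘ (Polynomial.X ^ m - Polynomial.C lam)).coeff (p.1).val


open scoped Classical

noncomputable def colP {Fq : Type*} [Field Fq] (m : ℕ) [NeZero m] {ℓ : ℕ}
    (c : ZMod m × Fin ℓ → Fq) (j : Fin ℓ) : Polynomial Fq :=
  ∑ k : ZMod m, Polynomial.C (c (k, j)) * Polynomial.X ^ (k.val)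

lemma colP_coeff {Fq : Type*} [Field Fq] (m : ℕ) [NeZero m] {ℓ : ℕ}
    (c : ZMod m × Fin ℓ → Fq) (j : Fin ℓ) (k : ZMod m) :
    (colP m c j).coeff k.val = c (k, j) := by
  rw [colP, Polynomial.finset_sum_coeff, Finset.sum_eq_single k]
  · simp
  · intro b _ hb
    have : k.val ≠ b.val := fun h => hb ((ZMod.val_injective m h.symm))
    simp [Polynomial.coeff_X_pow, this]
  · simp

lemma colP_degree_lt {Fq : Type*} [Field Fq] (m : ℕ) [NeZero m] {ℓ : ℕ}
    (c : ZMod m × Fin ℓ → Fq) (j : Fin ℓ) : (colP m c j).degree < m := by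
  refine lt_of_le_of_lt (Polynomial.degree_sum_le _ _) ?_
  rw [Finset.sup_lt_iff (by exact_mod_cast WithBot.bot_lt_coe m)]
  intro k _
  refine lt_of_le_of_lt (Polynomial.degree_C_mul_X_pow_le _ _) ?_
  exact_mod_cast ZMod.val_lt k

lemma colP_aeval {Fq F : Type*} [Field Fq] [Field F] [Algebra Fq F] (m : ℕ) [NeZero m] {ℓ : ℕ}
    (c : ZMod m × Fin ℓ → Fq) (j : Fin ℓ) (β : F) :
    Polynomial.aeval β (colP m c j) = ∑ k : ZMod m, algebraMap Fq F (c (k, j)) * β ^ k.val := by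
  simp [colP]

def zmodFinEquiv (m : ℕ) [NeZero m] : Fin m ≃ ZMod m where
  toFun k := ((k : ℕ) : ZMod m)
  invFun k := ⟨k.val, ZMod.val_lt k⟩
  left_inv k := by
    ext
    simp [ZMod.val_cast_of_lt k.isLt]
  right_inv k := ZMod.natCast_rightInverse k

lemma colP_eq_fin {Fq : Type*} [Field Fq] (m : ℕ) [NeZero m] {ℓ : ℕ}
    (c : ZMod m × Fin ℓ → Fq) (j : Fin ℓ) :
    ∑ k : Fin m, Polynomial.C (c (((k : ℕ) : ZMod m), j)) * X ^ (k : ℕ) = colP m c j := by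
  rw [colP]
  refine Fintype.sum_equiv (zmodFinEquiv m) _ _ fun k => ?_
  simp [zmodFinEquiv, ZMod.val_cast_of_lt k.isLt]

lemma wt_comp_equiv {ι κ K : Type*} [Fintype ι] [Fintype κ] [Zero K] (e : ι ≃ κ) (g : κ → K) :
    wt (fun i => g (e i)) = wt g := by
  rw [wt, wt]
  exact Finset.card_equiv e (by simp)

lemma wt_sum_cols {K : Type*} [Zero K] {m ℓ : ℕ} [NeZero m] (c : ZMod m × Fin ℓ → K) :
    wt c = ∑ j : Fin ℓ, wt (fun k : ZMod m => c (k, j)) := by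
  rw [wt, Finset.card_eq_sum_card_fiberwise (f := Prod.snd) (t := Finset.univ)
    (fun x _ => Finset.mem_univ _)]
  refine Finset.sum_congr rfl fun j _ => ?_
  rw [wt]
  refine Finset.card_bij (fun p _ => p.1) ?_ ?_ ?_
  · rintro ⟨k, j'⟩ hp
    simp only [Finset.mem_filter, Finset.mem_univ, true_and] at hp ⊢
    obtain ⟨h1, h2⟩ := hp
    subst h2; exact h1
  · rintro ⟨k, j1⟩ h1 ⟨k', j2⟩ h2 h
    simp only [Finset.mem_filter] at h1 h2
    cases h1.2; cases h2.2; cases h; rfl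
  · intro k hk
    simp only [Finset.mem_filter, Finset.mem_univ, true_and] at hk ⊢
    exact ⟨(k, j), ⟨hk, rfl⟩, rfl⟩

theorem jensen_bound
    {Fq F : Type*} [Field Fq] [Fintype Fq] [Field F] [Algebra Fq F]
    (m ℓ : ℕ) [NeZero m] (hcop : Nat.Coprime m (Fintype.card Fq))
    (lam : Fq) (hlam : lam ≠ 0)
    (hsplit : IsSplittingField Fq F (X ^ m - C lam))
    (𝓒 : Submodule Fq (ZMod m × Fin ℓ → Fq))
    (hQT : ∀ c ∈ 𝓒, rho m ℓ lam c ∈ 𝓒)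
    (h0 : 𝓒 ≠ ⊥)
    (s : ℕ) (f : Fin s → Polynomial Fq)
    (hmon : ∀ i, (f i).Monic) (hirr : ∀ i, Irreducible (f i))
    (hfinj : Function.Injective f)
    (hprod : ∏ i, f i = X ^ m - C lam)
    (βc : Fin s → F) (hβc : ∀ i, Polynomial.aeval (βc i) (f i) = 0)
    (Const : Fin s → Set (Fin ℓ → F))
    (hConst : ∀ i, Const i =
      {w | ∃ c ∈ 𝓒, w = fun j => ∑ k : ZMod m, algebraMap Fq F (c (k, j)) * βc i ^ k.val})
    (t : ℕ) (σ : Fin t → Fin s) (hσinj : Function.Injective σ)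
    (hnz : ∀ r, ∃ w ∈ Const (σ r), w ≠ 0)
    (hcover : ∀ i, (∃ w ∈ Const i, w ≠ 0) → ∃ r, σ r = i)
    (hmono : Monotone fun r => minDist (Const (σ r)))
    (Θ : Fin t → Set (Fin m → Fq))
    (hΘ : ∀ r, Θ r = {c | ((X ^ m - C lam) / ∏ j ∈ Finset.Iic r, f (σ j)) ∣
        ∑ k : Fin m, Polynomial.C (c k) * X ^ (k : ℕ)}) :
    ⨅ r, minDist (Const (σ r)) * minDist (Θ r) ≤
      minDist (𝓒 : Set (ZMod m × Fin ℓ → Fq)) := by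
  refine le_sInf ?_
  rintro n ⟨c, hc, hcne, rfl⟩
  -- constituent words
  have hw : ∀ i : Fin s, (fun j => Polynomial.aeval (βc i) (colP m c j)) ∈ Const i := by
    intro i
    rw [hConst]
    exact ⟨c, hc, funext fun j => colP_aeval m c j (βc i)⟩
  -- divisibility from vanishing
  have hfdvd : ∀ (i : Fin s) (p : Polynomial Fq), Polynomial.aeval (βc i) p = 0 → f i ∣ p := by
    intro i p hp
    have hmin : minpoly Fq (βc i) = f i :=
      (minpoly.eq_of_irreducible_of_monic (hirr i) (hβc i) (hmon i)).symm
    rw [← hmin]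
    exact minpoly.dvd Fq (βc i) hp
  -- pairwise coprimality
  have hcop2 : ∀ i i' : Fin s, i ≠ i' → IsCoprime (f i) (f i') := by
    intro i i' hne
    rw [(hirr i).coprime_iff_not_dvd]
    rintro ⟨u, hu⟩
    rcases (hirr i').isUnit_or_isUnit hu with h1 | h2
    · exact (hirr i).not_isUnit h1
    · obtain ⟨v, rfl⟩ := h2
      exact hne (hfinj (Polynomial.eq_of_monic_of_associated (hmon i) (hmon i') ⟨v, hu.symm⟩))
  have hproddvd : ∀ (S : Finset (Fin s)) (p : Polynomial Fq),
      (∀ i ∈ S, f i ∣ p) → (∏ i ∈ S, f i) ∣ p :=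
    fun S p h => Finset.prod_dvd_of_coprime (fun i _ i' hi' hne => hcop2 i i' hne) h
  -- a nonzero coordinate
  obtain ⟨⟨k0, j0⟩, hk0⟩ : ∃ p, c p ≠ 0 := by
    by_contra h
    push_neg at h
    exact hcne (funext fun p => h p)
  have hPj0 : colP m c j0 ≠ 0 := fun h => hk0 (by
    rw [← colP_coeff m c j0 k0, h, Polynomial.coeff_zero])
  have hdegXm : (X ^ m - Polynomial.C lam : Polynomial Fq).degree = m :=
    Polynomial.degree_X_pow_sub_C (Nat.pos_of_ne_zero (NeZero.ne m)) lam
  -- some constituent is nonzero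
  have hex : ∃ i, Polynomial.aeval (βc i) (colP m c j0) ≠ 0 := by
    by_contra h
    push_neg at h
    have hdvd : (X ^ m - Polynomial.C lam) ∣ colP m c j0 := by
      rw [← hprod]
      exact hproddvd Finset.univ _ (fun i _ => hfdvd i _ (h i))
    exact hPj0 (Polynomial.eq_zero_of_dvd_of_degree_lt hdvd
      (hdegXm ▸ colP_degree_lt m c j0))
  obtain ⟨i0, hi0⟩ := hex
  set Rset : Finset (Fin t) :=
    Finset.univ.filter (fun r => ∃ j, Polynomial.aeval (βc (σ r)) (colP m c j) ≠ 0) with hRset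
  have hsub : ∀ i : Fin s, (∀ j, Polynomial.aeval (βc i) (colP m c j) = 0) ∨
      ∃ r ∈ Rset, σ r = i := by
    intro i
    by_cases h : ∀ j, Polynomial.aeval (βc i) (colP m c j) = 0
    · exact Or.inl h
    · push_neg at h
      obtain ⟨j, hj⟩ := h
      obtain ⟨r, hr⟩ := hcover i ⟨_, hw i, fun h0 => hj (by simpa using congrFun h0 j)⟩
      refine Or.inr ⟨r, Finset.mem_filter.2 ⟨Finset.mem_univ _, ⟨j, ?_⟩⟩, hr⟩
      rw [hr]; exact hj
  have hRne : Rset.Nonempty := by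
    rcases hsub i0 with h | ⟨r, hr, _⟩
    · exact absurd (h j0) hi0
    · exact ⟨r, hr⟩
  set rs := Rset.max' hRne with hrs
  -- the quotient polynomial divides every column
  have himg : ∏ r' ∈ Finset.Iic rs, f (σ r') = ∏ i ∈ (Finset.Iic rs).image σ, f i :=
    (Finset.prod_image (fun a _ b _ h => hσinj h)).symm
  have hsplit2 : (∏ i ∈ (Finset.Iic rs).image σ, f i) *
      ∏ i ∈ ((Finset.Iic rs).image σ)ᶜ, f i = X ^ m - Polynomial.C lam := by
    rw [Finset.prod_mul_prod_compl]
    exact hprod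
  have hne0 : (∏ i ∈ (Finset.Iic rs).image σ, f i) ≠ 0 :=
    (Finset.prod_ne_zero_iff).2 fun i _ => (hmon i).ne_zero
  have hquot : (X ^ m - Polynomial.C lam) / ∏ r' ∈ Finset.Iic rs, f (σ r') =
      ∏ i ∈ ((Finset.Iic rs).image σ)ᶜ, f i := by
    rw [himg]
    exact (EuclideanDomain.eq_div_of_mul_eq_right hne0 hsplit2).symm
  have hdvdcol : ∀ j, ((X ^ m - Polynomial.C lam) / ∏ r' ∈ Finset.Iic rs, f (σ r')) ∣
      colP m c j := by
    intro j
    rw [hquot]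
    refine hproddvd _ _ fun i hi => ?_
    refine hfdvd i _ ?_
    by_contra hne
    rcases hsub i with h | ⟨r, hr, hri⟩
    · exact hne (h j)
    · refine (Finset.mem_compl.1 hi) ?_
      refine Finset.mem_image.2 ⟨r, Finset.mem_Iic.2 (Finset.le_max' _ _ hr), hri⟩
  -- the nonzero constituent word at rs
  set w : Fin ℓ → F := fun j => Polynomial.aeval (βc (σ rs)) (colP m c j) with hwdef
  have hwne : w ≠ 0 := by
    obtain ⟨-, j, hj⟩ := Finset.mem_filter.1 (Rset.max'_mem hRne)
    exact fun h => hj (by simpa using congrFun h j)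
  have h1 : minDist (Const (σ rs)) ≤ (wt w : ℕ∞) := sInf_le ⟨w, hw (σ rs), hwne, rfl⟩
  set S : Finset (Fin ℓ) := Finset.univ.filter (fun j => w j ≠ 0) with hS
  have hScard : wt w = S.card := rfl
  -- per-column bounds
  have hcol : ∀ j ∈ S, minDist (Θ rs) ≤ ((wt fun k : ZMod m => c (k, j)) : ℕ∞) := by
    intro j hj
    rw [hS, Finset.mem_filter] at hj
    have hwj : w j ≠ 0 := hj.2
    have hPj : colP m c j ≠ 0 := fun h => hwj (by rw [hwdef]; simp [h])
    set v : Fin m → Fq := fun k => c (((k : ℕ) : ZMod m), j) with hv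
    have hvmem : v ∈ Θ rs := by
      rw [hΘ rs]
      show _ ∣ ∑ k : Fin m, Polynomial.C (v k) * X ^ (k : ℕ)
      rw [hv]
      rw [colP_eq_fin m c j]
      exact hdvdcol j
    have hvne : v ≠ 0 := by
      intro hv0
      refine hPj ?_
      rw [colP]
      refine Finset.sum_eq_zero fun k _ => ?_
      have : c (k, j) = v ⟨k.val, ZMod.val_lt k⟩ := by
        rw [hv]
        congr 1
        rw [Prod.mk.injEq]
        exact ⟨(ZMod.natCast_rightInverse k).symm, rfl⟩
      rw [this, hv0]
      simp
    have h2 : minDist (Θ rs) ≤ (wt v : ℕ∞) := sInf_le ⟨v, hvmem, hvne, rfl⟩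
    have h3 : wt v = wt (fun k : ZMod m => c (k, j)) :=
      wt_comp_equiv (zmodFinEquiv m) (fun k => c (k, j))
    rw [← h3]
    exact h2
  calc ⨅ r, minDist (Const (σ r)) * minDist (Θ r)
      ≤ minDist (Const (σ rs)) * minDist (Θ rs) := iInf_le _ rs
    _ ≤ (wt w : ℕ∞) * minDist (Θ rs) := mul_le_mul_left h1 _
    _ = S.card • minDist (Θ rs) := by rw [hScard, nsmul_eq_mul]
    _ ≤ ∑ j ∈ S, ((wt fun k : ZMod m => c (k, j)) : ℕ∞) :=
        Finset.card_nsmul_le_sum S _ _ hcol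
    _ = ((∑ j ∈ S, wt fun k : ZMod m => c (k, j) : ℕ) : ℕ∞) := by
        rw [Nat.cast_sum]
    _ ≤ (wt c : ℕ∞) := by
        rw [wt_sum_cols c]
        exact_mod_cast Finset.sum_le_sum_of_subset S.subset_univ
end

section
/- Rank of the eigenvalue matrix: Let C ⊆ F_q^{mℓ} be a λ-QT code with associated upper-triangular matrix G̃(x) and nonempty eigenvalue set. Let β_1,…,β_t be the distinct eigenvalues of C with eigenspaces V_{β_1},…,V_{β_t} of dimensions n_1,…,n_t over F. For each i, let V_i be an n_i × ℓ matrix over F whose rows form a basis of V_{β_i}, let H_i = (1, β_i, β_i², …, β_i^{m−1}) ⊗ V_i (an n_i × mℓ matrix), and let H be the (n_1 + ⋯ + n_t) × mℓ matrix obtained by stacking H_1,…,H_t. Then rank(H) = mℓ − dim_{F_q}(C). -/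
/-!
Read column `j` of an array `z` as the polynomial `z_j(X) = Σ_k z_{k,j} X^k`. Row `(i, r)` of `H`
then computes `V_i[r] ⬝ z(β_i)`, so `H z = 0` iff at every root `x` of `X^m - λ` the vector `z(x)`
is orthogonal to `ker G̃(x)` (automatic where `G̃(x)` is invertible, and at an eigenvalue `β_i`
this kernel is spanned by the rows of `V_i`), i.e. iff `z(x)` lies in the row space of `G̃(x)`.
Since `gcd(m, q) = 1` the roots of `X^m - λ` are simple, so Lagrange interpolation of these row
combinations gives a polynomial vector `A` with `z ≡ A G̃ mod X^m - λ`, which puts `z` in `𝓒 ⊗ F`.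
Hence `ker H = 𝓒 ⊗ F`, whose `F`-dimension is `dim_{F_q} 𝓒`, and rank–nullity concludes.
-/

open Polynomial

open scoped Matrix

theorem Nat.Coprime.cast_ne_zero_of_card {K : Type*} [Field K] [Fintype K] {m : ℕ}
    (h : m.Coprime (Fintype.card K)) : (m : K) ≠ 0 := by
  simpa using (Nat.isCoprime_iff_coprime.mpr h).intCast (R := K)

theorem dotProduct_eq_zero_of_mem_span {K κ : Type*} [CommSemiring K] [Fintype κ] {u : κ → K}
    {s : Set (κ → K)} (h : ∀ v ∈ s, u ⬝ᵥ v = 0) {v : κ → K} (hv : v ∈ Submodule.span K s) :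
    u ⬝ᵥ v = 0 :=
  Submodule.span_le (p := LinearMap.ker (dotProductBilin K K u)).mpr h hv

theorem Matrix.exists_vecMul_eq_of_forall_mulVec_eq_zero {K ι κ : Type*} [Field K] [Fintype ι]
    [Fintype κ] (M : Matrix ι κ K) {u : κ → K} (h : ∀ v, M *ᵥ v = 0 → u ⬝ᵥ v = 0) :
    ∃ a, a ᵥ* M = u := by
  classical
  have hu : dotProductEquiv K κ u ∈ Submodule.span K (Set.range (dotProductEquiv K κ ∘ M.row)) :=
    mem_span_of_iInf_ker_le_ker fun v hv =>
      h v (funext fun i => LinearMap.mem_ker.mp ((Submodule.mem_iInf _).mp hv i))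
  rwa [Set.range_comp, Submodule.span_image_linearEquiv, Submodule.mem_map_equiv,
    LinearEquiv.symm_apply_apply, ← range_vecMulLinear] at hu

theorem Matrix.dotProduct_aeval_eq_zero_of_mem_span_row {K L ι κ : Type*} [CommRing K]
    [CommRing L] [Algebra K L] [Fintype ι] [Fintype κ] {G : Matrix ι κ K[X]} {f : κ → K[X]}
    (hf : f ∈ Submodule.span K[X] (Set.range G.row)) {x : L} {v : κ → L}
    (hv : G.map (aeval x) *ᵥ v = 0) : (fun j => aeval x (f j)) ⬝ᵥ v = 0 := by
  rw [← range_vecMulLinear] at hf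
  obtain ⟨a, rfl⟩ := hf
  change (fun j => aeval x ((a ᵥ* G) j)) ⬝ᵥ v = 0
  have hx : (fun j => aeval x ((a ᵥ* G) j)) = (aeval x ∘ a) ᵥ* G.map (aeval x) :=
    _root_.funext ((aeval x).toRingHom.map_vecMul G a)
  rw [hx, ← dotProduct_mulVec, hv, dotProduct_zero]

theorem Polynomial.Splits.dvd_of_forall_isRoot {K : Type*} [Field K] {f g : K[X]} (hf : f.Splits)
    (hsep : f.Separable) (h : ∀ x, f.IsRoot x → g.IsRoot x) : f ∣ g := by
  rcases eq_or_ne g 0 with rfl | hg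
  · exact dvd_zero f
  refine hf.dvd_of_roots_le_roots hsep.ne_zero ((Multiset.le_iff_subset (nodup_roots hsep)).mpr ?_)
  exact fun x hx => (mem_roots hg).mpr (h x (isRoot_of_mem_roots hx))

/-- Lagrange-interpolating the row combinations `a` over the roots of `P` gives `A`; then
`f - A ᵥ* G` vanishes at every root of `P`. -/
theorem Polynomial.Splits.exists_dvd_sub_vecMul {L ι κ : Type*} [Field L] [Fintype ι] {P : L[X]}
    (hP : P.Splits) (hsep : P.Separable) (G : Matrix ι κ L[X]) (f : κ → L[X])
    (h : ∀ x, P.IsRoot x → ∃ a : ι → L, a ᵥ* G.map (eval x) = fun j => (f j).eval x) :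
    ∃ A : ι → L[X], ∀ j, P ∣ f j - (A ᵥ* G) j := by
  classical
  choose! a ha using h
  let s := P.roots.toFinset
  refine ⟨fun k => Lagrange.interpolate s id (fun x => a x k), fun j => ?_⟩
  refine hP.dvd_of_forall_isRoot hsep fun x hx => ?_
  have hxs : x ∈ s := Multiset.mem_toFinset.mpr ((mem_roots hsep.ne_zero).mpr hx)
  have hA : (fun k => (Lagrange.interpolate s id (fun x => a x k)).eval x) = a x :=
    _root_.funext fun k => Lagrange.eval_interpolate_at_node (fun x => a x k) (Set.injOn_id _) hxs
  rw [IsRoot, eval_sub, ← coe_evalRingHom, RingHom.map_vecMul, Function.comp_def]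
  simp only [coe_evalRingHom, hA, ha x hx, sub_self]

noncomputable def Submodule.baseChangePi {K N : Type*} (L : Type*) [Field K] [Field L]
    [Algebra K L] (W : Submodule K (N → K)) : Submodule L (N → L) :=
  Submodule.span L ((algebraMap K L ∘ ·) '' W)

theorem Submodule.finrank_baseChangePi {K L N : Type*} [Field K] [Field L] [Algebra K L]
    [Fintype N] (W : Submodule K (N → K)) :
    Module.finrank L (W.baseChangePi L) = Module.finrank K W := by
  let b := Module.finBasis K W
  have hW : (W : Set (N → K)) = Submodule.span K (Set.range (W.subtype ∘ b)) := by
    rw [Set.range_comp, ← Submodule.map_span, b.span_eq, Submodule.map_top, Submodule.range_subtype]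
  let φ : (N → K) →ₗ[K] (N → L) := (Algebra.linearMap K L).compLeft N
  have hφ : (algebraMap K L ∘ ·) '' (W : Set (N → K)) = φ '' W := rfl
  rw [baseChangePi, hφ, hW, ← Submodule.map_coe, Submodule.map_span, Submodule.span_span_of_tower,
    ← Set.range_comp, finrank_span_eq_card, Fintype.card_fin]
  exact linearIndependent_algebraMap_comp_iff.mpr (b.linearIndependent.map' _ W.ker_subtype)

section ColumnPolynomial

variable {K ι : Type*} [Field K] {m : ℕ} [NeZero m]

noncomputable def colPoly (c : ZMod m × ι → K) (j : ι) : K[X] :=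
  ∑ k : ZMod m, C (c (k, j)) * X ^ k.val

theorem eval_colPoly (c : ZMod m × ι → K) (j : ι) (x : K) :
    (colPoly c j).eval x = ∑ k : ZMod m, c (k, j) * x ^ k.val := by
  simp [colPoly, eval_finsetSum]

theorem map_colPoly {L : Type*} [Field L] (f : K →+* L) (c : ZMod m × ι → K) (j : ι) :
    (colPoly c j).map f = colPoly (f ∘ c) j := by
  simp [colPoly, Polynomial.map_sum]

theorem degree_colPoly_lt (c : ZMod m × ι → K) (j : ι) : (colPoly c j).degree < m := by
  refine (degree_sum_le _ _).trans_lt ((Finset.sup_lt_iff (WithBot.bot_lt_coe m)).mpr fun k _ => ?_)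
  exact (degree_C_mul_X_pow_le _ _).trans_lt (WithBot.coe_lt_coe.mpr k.val_lt)

theorem coeff_colPoly_val (c : ZMod m × ι → K) (j : ι) (k : ZMod m) :
    (colPoly c j).coeff k.val = c (k, j) := by
  simp [colPoly, coeff_C_mul, coeff_X_pow, ZMod.val_injective m |>.eq_iff]

theorem arrOf_colPoly {ℓ : ℕ} (lam : K) (c : ZMod m × Fin ℓ → K) :
    arrOf m ℓ lam (colPoly c) = c := by
  ext p
  rw [arrOf, (modByMonic_eq_self_iff (monic_X_pow_sub_C lam (NeZero.ne m))).mpr, coeff_colPoly_val]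
  rw [degree_X_pow_sub_C (NeZero.pos m)]
  exact degree_colPoly_lt c p.2

theorem mulVec_apply_eq_dotProduct_eval_colPoly {κ : Type*} [Fintype ι]
    {H : Matrix κ (ZMod m × ι) K} {β : κ → K} {V : κ → ι → K}
    (hH : ∀ i p, H i p = β i ^ p.1.val * V i p.2) (z : ZMod m × ι → K) (i : κ) :
    (H *ᵥ z) i = V i ⬝ᵥ fun j => (colPoly z j).eval (β i) := by
  simp only [Matrix.mulVec, dotProduct, hH, eval_colPoly, Fintype.sum_prod_type, Finset.mul_sum]
  rw [Finset.sum_comm]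
  exact Finset.sum_congr rfl fun j _ => Finset.sum_congr rfl fun k _ => by ring

theorem baseChangePi_le_ker_mulVecLin {L κ ρ : Type*} [Field L] [Algebra K L] [Fintype ι]
    [Fintype ρ] {𝓒 : Submodule K (ZMod m × ι → K)} {G : Matrix ρ ι K[X]}
    (hG : ∀ c ∈ 𝓒, colPoly c ∈ Submodule.span K[X] (Set.range G.row))
    {H : Matrix κ (ZMod m × ι) L} {β : κ → L} {V : κ → ι → L}
    (hH : ∀ i p, H i p = β i ^ p.1.val * V i p.2) (hV : ∀ i, G.map (aeval (β i)) *ᵥ V i = 0) :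
    𝓒.baseChangePi L ≤ LinearMap.ker H.mulVecLin := by
  refine Submodule.span_le.mpr ?_
  rintro _ ⟨c, hc, rfl⟩
  ext i
  rw [Matrix.mulVecLin_apply, mulVec_apply_eq_dotProduct_eval_colPoly hH, dotProduct_comm]
  simpa [← map_colPoly, eval_map, aeval_def] using
    Matrix.dotProduct_aeval_eq_zero_of_mem_span_row (hG c hc) (hV i)

end ColumnPolynomial

noncomputable def arrOfₗ {K : Type*} [Field K] (m ℓ : ℕ) [NeZero m] (lam : K) :
    (Fin ℓ → K[X]) →ₗ[K] (ZMod m × Fin ℓ → K) where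
  toFun := arrOf m ℓ lam
  map_add' v w := by ext p; simp [arrOf, add_modByMonic]
  map_smul' a v := by ext p; simp [arrOf, smul_modByMonic]

section ArrayOfPolynomials

variable {K : Type*} [Field K] {m ℓ : ℕ} [NeZero m]

@[simp]
theorem arrOfₗ_apply (lam : K) (v : Fin ℓ → K[X]) : arrOfₗ m ℓ lam v = arrOf m ℓ lam v := rfl

theorem arrOf_eq_of_dvd_sub {lam : K} {v w : Fin ℓ → K[X]} (h : ∀ j, X ^ m - C lam ∣ v j - w j) :
    arrOf m ℓ lam v = arrOf m ℓ lam w := by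
  rw [← arrOfₗ_apply, ← arrOfₗ_apply, ← sub_eq_zero, ← map_sub]
  ext p
  simp [arrOf, (modByMonic_eq_zero_iff_dvd (monic_X_pow_sub_C lam (NeZero.ne m))).mpr (h p.2)]

theorem arrOf_map {L : Type*} [Field L] [Algebra K L] (lam : K) (v : Fin ℓ → K[X]) :
    arrOf m ℓ (algebraMap K L lam) (fun j => (v j).map (algebraMap K L)) =
      algebraMap K L ∘ arrOf m ℓ lam v := by
  have hP : X ^ m - C (algebraMap K L lam) = (X ^ m - C lam).map (algebraMap K L) := by simp
  ext p
  simp only [arrOf, hP, Function.comp_apply,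
    ← map_modByMonic _ (monic_X_pow_sub_C lam (NeZero.ne m)), coeff_map]

theorem arrOf_smul_map_mem_baseChangePi {L : Type*} [Field L] [Algebra K L] {lam : K}
    {𝓒 : Submodule K (ZMod m × Fin ℓ → K)} {𝓜 : Submodule K[X] (Fin ℓ → K[X])}
    (h𝓜 : ∀ v ∈ 𝓜, arrOf m ℓ lam v ∈ 𝓒) (A : L[X]) {w : Fin ℓ → K[X]} (hw : w ∈ 𝓜) :
    arrOf m ℓ (algebraMap K L lam) (A • fun j => (w j).map (algebraMap K L)) ∈
      𝓒.baseChangePi L := by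
  induction A using Polynomial.induction_on' with
  | add p q hp hq => rw [add_smul, ← arrOfₗ_apply, map_add]; exact add_mem hp hq
  | monomial n a =>
    have hmon : (monomial n a • fun j => (w j).map (algebraMap K L)) =
        a • fun j => (((X : K[X]) ^ n • w) j).map (algebraMap K L) := by
      ext j : 1
      simp [← C_mul_X_pow_eq_monomial, smul_eq_C_mul, mul_assoc]
    rw [hmon, ← arrOfₗ_apply, map_smul, arrOfₗ_apply, arrOf_map]
    exact Submodule.smul_mem _ _ (Submodule.subset_span ⟨_, h𝓜 _ (𝓜.smul_mem _ hw), rfl⟩)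

theorem mem_baseChangePi_of_forall_pow_eq {L : Type*} [Field L] [Algebra K L] {lam : K}
    (hlam : lam ≠ 0) (hm : (m : L) ≠ 0) (hsplit : (X ^ m - C (algebraMap K L lam)).Splits)
    {𝓒 : Submodule K (ZMod m × Fin ℓ → K)} {G : Matrix (Fin ℓ) (Fin ℓ) K[X]}
    (hG : ∀ v ∈ Submodule.span K[X] (Set.range G.row), arrOf m ℓ lam v ∈ 𝓒)
    {z : ZMod m × Fin ℓ → L}
    (hz : ∀ x : L, x ^ m = algebraMap K L lam → ∀ v, G.map (aeval x) *ᵥ v = 0 →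
      (fun j => (colPoly z j).eval x) ⬝ᵥ v = 0) :
    z ∈ 𝓒.baseChangePi L := by
  set μ := algebraMap K L lam
  have hsep : (X ^ m - C μ).Separable :=
    separable_X_pow_sub_C μ hm ((map_ne_zero (algebraMap K L)).mpr hlam)
  let G' := G.map (map (algebraMap K L))
  obtain ⟨A, hA⟩ := hsplit.exists_dvd_sub_vecMul hsep G' (colPoly z) fun x hx => by
    have hGx : G'.map (eval x) = G.map (aeval x) := by ext; simp [G', eval_map, aeval_def]
    rw [hGx]
    exact (G.map (aeval x)).exists_vecMul_eq_of_forall_mulVec_eq_zero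
      (hz x (by simpa [sub_eq_zero] using hx))
  rw [← arrOf_colPoly μ z, arrOf_eq_of_dvd_sub hA, Matrix.vecMul_eq_sum, ← arrOfₗ_apply, map_sum]
  exact Submodule.sum_mem _ fun k _ =>
    arrOf_smul_map_mem_baseChangePi hG (A k) (Submodule.subset_span ⟨k, rfl⟩)

theorem ker_mulVecLin_le_baseChangePi {L κ : Type*} [Field L] [Algebra K L]
    {lam : K} (hlam : lam ≠ 0) (hm : (m : L) ≠ 0)
    (hsplit : (X ^ m - C (algebraMap K L lam)).Splits) {𝓒 : Submodule K (ZMod m × Fin ℓ → K)}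
    {G : Matrix (Fin ℓ) (Fin ℓ) K[X]}
    (hG : ∀ v ∈ Submodule.span K[X] (Set.range G.row), arrOf m ℓ lam v ∈ 𝓒)
    {H : Matrix κ (ZMod m × Fin ℓ) L} {β : κ → L} {V : κ → Fin ℓ → L}
    (hH : ∀ i p, H i p = β i ^ p.1.val * V i p.2)
    (hV : ∀ x : L, x ^ m = algebraMap K L lam → ∀ v, G.map (aeval x) *ᵥ v = 0 →
      v ∈ Submodule.span L (V '' {i | β i = x})) :
    LinearMap.ker H.mulVecLin ≤ 𝓒.baseChangePi L := by
  intro z hz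
  refine mem_baseChangePi_of_forall_pow_eq hlam hm hsplit hG fun x hx v hv => ?_
  refine dotProduct_eq_zero_of_mem_span ?_ (hV x hx v hv)
  rintro _ ⟨i, rfl, rfl⟩
  rw [dotProduct_comm, ← mulVec_apply_eq_dotProduct_eval_colPoly hH]
  exact congrFun hz i

end ArrayOfPolynomials

theorem rank_of_eigenvalue_matrix_general
    {Fq F : Type*} [Field Fq] [Fintype Fq] [Field F] [Algebra Fq F]
    (m ℓ : ℕ) [NeZero m] (hcop : Nat.Coprime m (Fintype.card Fq))
    (lam : Fq) (hlam : lam ≠ 0)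
    (hsplit : IsSplittingField Fq F (X ^ m - C lam))
    (𝓒 : Submodule Fq (ZMod m × Fin ℓ → Fq))
    (G : Matrix (Fin ℓ) (Fin ℓ) (Polynomial Fq))
    (hGen : ∀ v : Fin ℓ → Polynomial Fq,
      arrOf m ℓ lam v ∈ 𝓒 ↔ v ∈ Submodule.span (Polynomial Fq) (Set.range fun i j => G i j))
    (t : ℕ) (β : Fin t → F)
    (hβall : ∀ x : F, x ^ m = algebraMap Fq F lam → Polynomial.aeval x G.det = 0 → ∃ i, β i = x)
    (n : Fin t → ℕ) (V : ∀ i, Matrix (Fin (n i)) (Fin ℓ) F)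
    (hVspan : ∀ i, Submodule.span F (Set.range fun r => V i r) =
      LinearMap.ker (Matrix.mulVecLin (G.map fun p => Polynomial.aeval (β i) p)))
    (H : Matrix ((i : Fin t) × Fin (n i)) (ZMod m × Fin ℓ) F)
    (hH : ∀ ir p, H ir p = β ir.1 ^ (p.1).val * V ir.1 ir.2 p.2)
 :
    H.rank = m * ℓ - Module.finrank Fq 𝓒 := by
  have hm : (m : F) ≠ 0 := by
    simpa using (algebraMap Fq F).injective.ne hcop.cast_ne_zero_of_card
  have hker : LinearMap.ker H.mulVecLin = 𝓒.baseChangePi F := by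
    refine le_antisymm (ker_mulVecLin_le_baseChangePi hlam hm (by simpa using hsplit.splits)
      (fun v hv => (hGen v).mpr hv) hH fun x hx v hv => ?_) ?_
    · by_cases hdet : aeval x G.det = 0
      · obtain ⟨i, rfl⟩ := hβall x hx hdet
        refine Submodule.span_mono ?_ ((hVspan i).ge hv)
        rintro _ ⟨r, rfl⟩
        exact ⟨⟨i, r⟩, rfl, rfl⟩
      · have hdet' : (G.map (aeval x)).det ≠ 0 := by
          simpa only [AlgHom.map_det, AlgHom.mapMatrix_apply] using hdet
        rw [Matrix.eq_zero_of_mulVec_eq_zero hdet' hv]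
        exact zero_mem _
    · exact baseChangePi_le_ker_mulVecLin
        (fun c hc => (hGen _).mp ((arrOf_colPoly lam c).symm ▸ hc)) hH
        fun ir => (hVspan ir.1).le (Submodule.subset_span ⟨ir.2, rfl⟩)
  have hrank := LinearMap.finrank_range_add_finrank_ker H.mulVecLin
  rw [hker, Submodule.finrank_baseChangePi] at hrank
  simp only [Module.finrank_fintype_fun_eq_card, Fintype.card_prod, ZMod.card,
    Fintype.card_fin] at hrank
  rw [Matrix.rank]
  omega

theorem rank_of_eigenvalue_matrix
    {Fq F : Type*} [Field Fq] [Fintype Fq] [Field F] [Algebra Fq F]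
    (m ℓ : ℕ) [NeZero m] (hcop : Nat.Coprime m (Fintype.card Fq))
    (lam : Fq) (hlam : lam ≠ 0)
    (hsplit : IsSplittingField Fq F (X ^ m - C lam))
    (𝓒 : Submodule Fq (ZMod m × Fin ℓ → Fq))
    (hQT : ∀ c ∈ 𝓒, rho m ℓ lam c ∈ 𝓒)
    (G : Matrix (Fin ℓ) (Fin ℓ) (Polynomial Fq))
    (htri : ∀ i j, j < i → G i j = 0)
    (hdeg : ∀ i j, i < j → (G i j).degree < (G j j).degree)
    (hdiv : ∀ j, G j j ∣ X ^ m - C lam)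
    (hfull : ∀ j, G j j = X ^ m - C lam → ∀ i, i ≠ j → G i j = 0)
    (hGen : ∀ v : Fin ℓ → Polynomial Fq,
      arrOf m ℓ lam v ∈ 𝓒 ↔ v ∈ Submodule.span (Polynomial Fq) (Set.range fun i j => G i j))
    (t : ℕ) (ht : 0 < t) (β : Fin t → F) (hβinj : Function.Injective β)
    (hβΩ : ∀ i, β i ^ m = algebraMap Fq F lam)
    (hβroot : ∀ i, Polynomial.aeval (β i) G.det = 0)
    (hβall : ∀ x : F, x ^ m = algebraMap Fq F lam → Polynomial.aeval x G.det = 0 → ∃ i, β i = x)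
    (n : Fin t → ℕ) (V : ∀ i, Matrix (Fin (n i)) (Fin ℓ) F)
    (hVind : ∀ i, LinearIndependent F (fun r => V i r))
    (hVspan : ∀ i, Submodule.span F (Set.range fun r => V i r) =
      LinearMap.ker (Matrix.mulVecLin (G.map fun p => Polynomial.aeval (β i) p)))
    (H : Matrix ((i : Fin t) × Fin (n i)) (ZMod m × Fin ℓ) F)
    (hH : ∀ ir p, H ir p = β ir.1 ^ (p.1).val * V ir.1 ir.2 p.2)
 :
    H.rank = m * ℓ - Module.finrank Fq 𝓒 :=
  rank_of_eigenvalue_matrix_general m ℓ hcop lam hlam hsplit 𝓒 G hGen t β hβall n V hVspan H hH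
end

section
/- Constituents dominate the eigencode: Let C ⊆ F_q^{mℓ} be a λ-QT code with associated upper-triangular matrix G̃(x) and nonempty eigenvalue set Ω̄ ⊆ Ω. Let V_{Ω̄} = ∩_{β∈Ω̄} V_β and let ℂ_{Ω̄} = ℂ(V_{Ω̄}) be the corresponding eigencode. For every i such that β_i is an eigenvalue of C, letting C̄_i ⊆ F^ℓ be the F-span of the rows of G̃(β_i) and C_i = { c(β_i) : c ∈ C } the i-th constituent, one has d(C_i) ≥ d(C̄_i) ≥ d(V_{Ω̄}^⊥) = d(V_{Ω̄}^⊥ ∩ F_q^ℓ) = d(ℂ_{Ω̄}), where V_{Ω̄}^⊥ ⊆ F^ℓ is the dual of V_{Ω̄} under the standard bilinear form. -/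
open Polynomial

/-- The eigenspace of `β` for the polynomial matrix `G`: the null space of `G(β)`. -/
def Vspace {Fq F : Type*} [Field Fq] [Field F] [Algebra Fq F] (ℓ : ℕ)
    (G : Matrix (Fin ℓ) (Fin ℓ) (Polynomial Fq)) (β : F) : Set (Fin ℓ → F) :=
  {v | (G.map fun p => Polynomial.aeval β p).mulVec v = 0}

/-- The eigencode of a set of vectors `V ⊆ F^ℓ`. -/
def eigencode {Fq F : Type*} [Field Fq] [Field F] [Algebra Fq F] (ℓ : ℕ)
    (V : Set (Fin ℓ → F)) : Set (Fin ℓ → Fq) :=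
  {u | ∀ v ∈ V, ∑ j, v j * algebraMap Fq F (u j) = 0}


/-!
Writing a codeword `c ∈ C` as a vector of polynomials, `c ∈ C̃` is an `F_q[x]`-combination of the
rows of `G̃`, so `c(β_i)` is an `F`-combination of the rows of `G̃(β_i)`; these rows are orthogonal
to `V_{β_i} ⊇ V_Ω̄`. This gives `C_i ⊆ C̄_i ⊆ V_Ω̄^⊥`, hence the first two inequalities.

The eigenvalue set `Ω̄` is stable under `Gal(F/F_q)`, hence so are `V_Ω̄` and `V_Ω̄^⊥`. For a
Galois-stable `F`-subspace `D ⊆ F^ℓ` and `v ∈ D`, the vector `(Tr(e v_j))_j` is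
`∑_σ σ(e v) ∈ D ∩ F_q^ℓ`, its support lies in that of `v`, and it is nonzero for a suitable `e`
since the trace is onto; so `D` and its subfield subcode have the same minimum distance.
-/

open Polynomial

section MinDist

variable {ι K : Type*} [Fintype ι] [Zero K]

lemma minDist_anti {S T : Set (ι → K)} (h : S ⊆ T) : minDist T ≤ minDist S :=
  sInf_le_sInf (by rintro n ⟨c, hc, h0, rfl⟩; exact ⟨c, h hc, h0, rfl⟩)

lemma minDist_le_wt {S : Set (ι → K)} {c : ι → K} (hc : c ∈ S) (h0 : c ≠ 0) :
    minDist S ≤ wt c :=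
  sInf_le ⟨c, hc, h0, rfl⟩

lemma wt_le_wt_of_zero_imp_zero {K' : Type*} [Zero K'] {c : ι → K} {d : ι → K'}
    (h : ∀ i, c i = 0 → d i = 0) : wt d ≤ wt c := by
  classical
  exact Finset.card_le_card fun i => by simpa using mt (h i)

end MinDist

section RowSpace

variable {ι R : Type*} [CommSemiring R]

lemma map_mem_span_rows {κ S : Type*} [Fintype κ] [CommSemiring S] (φ : R →+* S)
    (A : Matrix κ ι R) {v : ι → R} (hv : v ∈ Submodule.span R (Set.range A)) :
    (fun j => φ (v j)) ∈ Submodule.span S (Set.range (A.map φ)) := by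
  obtain ⟨c, rfl⟩ := (Submodule.mem_span_range_iff_exists_fun R).1 hv
  refine (Submodule.mem_span_range_iff_exists_fun S).2 ⟨fun a => φ (c a), ?_⟩
  ext j
  simp [Finset.sum_apply, map_sum]

variable [Fintype ι]

def dotOrthogonal (W : Set (ι → R)) : Submodule R (ι → R) where
  carrier := {v | ∀ w ∈ W, w ⬝ᵥ v = 0}
  add_mem' hv hv' w hw := by rw [dotProduct_add, hv w hw, hv' w hw, add_zero]
  zero_mem' w _ := dotProduct_zero w
  smul_mem' a v hv w hw := by rw [dotProduct_smul, hv w hw, smul_zero]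

lemma dotOrthogonal_anti {W W' : Set (ι → R)} (h : W ⊆ W') :
    dotOrthogonal W' ≤ dotOrthogonal W :=
  fun _ hv w hw => hv w (h hw)

lemma span_rows_le_dotOrthogonal_ker {κ : Type*} (A : Matrix κ ι R) :
    Submodule.span R (Set.range A) ≤ dotOrthogonal {v | A.mulVec v = 0} := by
  rw [Submodule.span_le]
  rintro _ ⟨a, rfl⟩ w hw
  rw [dotProduct_comm]
  exact congrFun hw a

end RowSpace

section Galois

variable (K : Type*) {L ι : Type*} [Field K] [Field L] [Algebra K L]

def IsGaloisStable (S : Set (ι → L)) : Prop :=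
  ∀ σ : L ≃ₐ[K] L, ∀ v ∈ S, (fun j => σ (v j)) ∈ S

/-- The subfield subcode `S ∩ K^ι`, with `K^ι` embedded in `L^ι` by `algebraMap`. -/
def subfieldSubcode (S : Set (ι → L)) : Set (ι → K) :=
  {u | (fun j => algebraMap K L (u j)) ∈ S}

variable {K}

lemma IsGaloisStable.dotOrthogonal [Fintype ι] {W : Set (ι → L)} (hW : IsGaloisStable K W) :
    IsGaloisStable K (dotOrthogonal W : Set (ι → L)) := by
  intro σ v hv w hw
  calc w ⬝ᵥ (fun j => σ (v j)) = σ ((fun j => σ.symm (w j)) ⬝ᵥ v) := by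
        simp [dotProduct, map_sum]
    _ = 0 := by rw [hv _ (hW σ.symm w hw), map_zero]

lemma trace_mul_mem_subfieldSubcode [FiniteDimensional K L] [IsGalois K L]
    {D : Submodule L (ι → L)} (hD : IsGaloisStable K (D : Set (ι → L))) {v : ι → L}
    (hv : v ∈ D) (e : L) :
    (fun j => Algebra.trace K L (e * v j)) ∈ subfieldSubcode K (D : Set (ι → L)) := by
  have hsum : (fun j => algebraMap K L (Algebra.trace K L (e * v j))) =
      ∑ σ : L ≃ₐ[K] L, fun j => σ ((e • v) j) := by
    ext j
    simp [trace_eq_sum_automorphisms, Finset.sum_apply]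
  change _ ∈ D
  rw [hsum]
  exact D.sum_mem fun σ _ => hD σ _ (D.smul_mem e hv)

theorem minDist_subfieldSubcode [Fintype ι] [FiniteDimensional K L] [IsGalois K L]
    (D : Submodule L (ι → L)) (hD : IsGaloisStable K (D : Set (ι → L))) :
    minDist (subfieldSubcode K (D : Set (ι → L))) = minDist (D : Set (ι → L)) := by
  refine le_antisymm (le_sInf ?_) (le_sInf ?_)
  · rintro _ ⟨v, hv, hv0, rfl⟩
    obtain ⟨j₀, hj₀⟩ := Function.ne_iff.1 hv0
    obtain ⟨t, ht⟩ := Algebra.trace_surjective K L 1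
    have hu0 : (fun j => Algebra.trace K L (t / v j₀ * v j)) ≠ 0 :=
      Function.ne_iff.2 ⟨j₀, by simp [div_mul_cancel₀ t hj₀, ht]⟩
    calc minDist (subfieldSubcode K (D : Set (ι → L)))
        _ ≤ wt fun j => Algebra.trace K L (t / v j₀ * v j) :=
          minDist_le_wt (trace_mul_mem_subfieldSubcode hD hv _) hu0
        _ ≤ wt v := by
          gcongr
          exact wt_le_wt_of_zero_imp_zero fun j hj => by simp [hj]
  · rintro _ ⟨u, hu, hu0, rfl⟩
    have hu0' : (fun j => algebraMap K L (u j)) ≠ 0 := by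
      obtain ⟨j₀, hj₀⟩ := Function.ne_iff.1 hu0
      exact Function.ne_iff.2 ⟨j₀, by simpa using hj₀⟩
    calc minDist (D : Set (ι → L))
        _ ≤ wt fun j => algebraMap K L (u j) := minDist_le_wt hu hu0'
        _ ≤ wt u := by
          gcongr
          exact wt_le_wt_of_zero_imp_zero fun j hj => by simp [hj]

end Galois

section QuasiTwisted

variable {Fq F : Type*} [Field Fq] [Field F] [Algebra Fq F] {m ℓ : ℕ}

noncomputable def polyOfArr [NeZero m] (c : ZMod m × Fin ℓ → Fq) : Fin ℓ → Fq[X] :=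
  fun j => ∑ k : ZMod m, C (c (k, j)) * X ^ k.val

lemma arrOf_polyOfArr [NeZero m] (lam : Fq) (c : ZMod m × Fin ℓ → Fq) :
    arrOf m ℓ lam (polyOfArr c) = c := by
  have hm : 0 < m := Nat.pos_of_ne_zero (NeZero.ne m)
  have hdeg : ∀ j, (polyOfArr c j).degree < m := fun j =>
    (degree_sum_le _ _).trans_lt <| (Finset.sup_lt_iff (WithBot.bot_lt_coe m)).2 fun k _ =>
      (degree_C_mul_X_pow_le _ _).trans_lt (WithBot.coe_lt_coe.2 (ZMod.val_lt k))
  funext p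
  rw [arrOf, (modByMonic_eq_self_iff (monic_X_pow_sub_C lam hm.ne')).2
    (by rw [degree_X_pow_sub_C hm]; exact hdeg p.2)]
  simp [polyOfArr, coeff_C_mul, coeff_X_pow, ZMod.val_injective m |>.eq_iff]

lemma aeval_polyOfArr [NeZero m] (c : ZMod m × Fin ℓ → Fq) (β : F) (j : Fin ℓ) :
    aeval β (polyOfArr c j) = ∑ k : ZMod m, algebraMap Fq F (c (k, j)) * β ^ k.val := by
  simp [polyOfArr, map_sum]

lemma eval_mem_span_rows [NeZero m] {lam : Fq} {𝓒 : Set (ZMod m × Fin ℓ → Fq)}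
    {G : Matrix (Fin ℓ) (Fin ℓ) Fq[X]}
    (hGen : ∀ v, arrOf m ℓ lam v ∈ 𝓒 → v ∈ Submodule.span Fq[X] (Set.range G))
    {c : ZMod m × Fin ℓ → Fq} (hc : c ∈ 𝓒) (β : F) :
    (fun j => ∑ k : ZMod m, algebraMap Fq F (c (k, j)) * β ^ k.val) ∈
      Submodule.span F (Set.range (G.map (aeval β))) := by
  have hv := hGen (polyOfArr c) (by rwa [arrOf_polyOfArr])
  simpa [aeval_polyOfArr] using map_mem_span_rows (aeval β).toRingHom G hv

lemma galois_mem_Vspace (G : Matrix (Fin ℓ) (Fin ℓ) Fq[X]) (σ : F ≃ₐ[Fq] F) {β : F}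
    {v : Fin ℓ → F} (hv : v ∈ Vspace ℓ G β) : (fun j => σ (v j)) ∈ Vspace ℓ G (σ β) := by
  have hmap : G.map (aeval (σ β)) = (G.map (aeval β)).map σ := by
    ext a j
    simp [aeval_algEquiv]
  funext a
  have := RingHom.map_mulVec (σ : F →+* F) (G.map (aeval β)) v a
  rw [hv] at this
  simpa [hmap, Function.comp_def] using this.symm

lemma isGaloisStable_iInter_Vspace (G : Matrix (Fin ℓ) (Fin ℓ) Fq[X]) {Ω : Set F}
    (hΩ : ∀ σ : F ≃ₐ[Fq] F, ∀ x ∈ Ω, σ x ∈ Ω) : IsGaloisStable Fq (⋂ β ∈ Ω, Vspace ℓ G β) := by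
  intro σ w hw
  simp only [Set.mem_iInter₂] at hw ⊢
  intro β hβ
  simpa using galois_mem_Vspace G σ (hw _ (hΩ σ.symm β hβ))

lemma galois_mem_eigenvalues (lam : Fq) (p : Fq[X]) (σ : F ≃ₐ[Fq] F) {x : F}
    (hx : x ∈ {x : F | x ^ m = algebraMap Fq F lam ∧ aeval x p = 0}) :
    σ x ∈ {x : F | x ^ m = algebraMap Fq F lam ∧ aeval x p = 0} :=
  ⟨by rw [← map_pow, hx.1, AlgEquiv.commutes], by simp [aeval_algEquiv, hx.2]⟩

end QuasiTwisted

theorem constituents_dominate_eigencode_general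
    {Fq F : Type*} [Field Fq] [Fintype Fq] [Field F] [Algebra Fq F]
    (m ℓ : ℕ) [NeZero m]
    (lam : Fq)
    (hsplit : IsSplittingField Fq F (X ^ m - C lam))
    (𝓒 : Submodule Fq (ZMod m × Fin ℓ → Fq))
    (G : Matrix (Fin ℓ) (Fin ℓ) (Polynomial Fq))
    (hGen : ∀ v : Fin ℓ → Polynomial Fq,
      arrOf m ℓ lam v ∈ 𝓒 ↔ v ∈ Submodule.span (Polynomial Fq) (Set.range fun i j => G i j))
    (s : ℕ)
    (βc : Fin s → F)
    (Ωbar : Set F)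
    (hΩbar : Ωbar = {x : F | x ^ m = algebraMap Fq F lam ∧ Polynomial.aeval x G.det = 0})
    (VΩ : Set (Fin ℓ → F)) (hVΩ : VΩ = ⋂ β ∈ Ωbar, Vspace ℓ G β)
    (dualV : Set (Fin ℓ → F)) (hdual : dualV = {v | ∀ w ∈ VΩ, ∑ j, w j * v j = 0})
    (i : Fin s) (hi : βc i ∈ Ωbar)
    (Cbar : Set (Fin ℓ → F))
    (hCbar : Cbar =
      ↑(Submodule.span F (Set.range fun a => (G.map fun p => Polynomial.aeval (βc i) p) a)))
    (Ci : Set (Fin ℓ → F))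
    (hCi : Ci = {w | ∃ c ∈ 𝓒, w = fun j => ∑ k : ZMod m, algebraMap Fq F (c (k, j)) * βc i ^ k.val}) :
    minDist Cbar ≤ minDist Ci ∧
    minDist dualV ≤ minDist Cbar ∧
    minDist dualV = minDist {u : Fin ℓ → Fq | (fun j => algebraMap Fq F (u j)) ∈ dualV} ∧
    minDist {u : Fin ℓ → Fq | (fun j => algebraMap Fq F (u j)) ∈ dualV} =
      minDist (eigencode (Fq := Fq) ℓ VΩ) := by
  have : FiniteDimensional Fq F := IsSplittingField.finiteDimensional F (X ^ m - C lam)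
  have : Finite F := Module.finite_of_finite Fq
  have hΩ : ∀ σ : F ≃ₐ[Fq] F, ∀ x ∈ Ωbar, σ x ∈ Ωbar := by
    subst hΩbar
    exact fun σ x => galois_mem_eigenvalues lam G.det σ
  have hV : IsGaloisStable Fq VΩ := hVΩ ▸ isGaloisStable_iInter_Vspace G hΩ
  subst hCi hCbar hdual
  refine ⟨minDist_anti ?_, minDist_anti ?_, (minDist_subfieldSubcode _ hV.dotOrthogonal).symm, rfl⟩
  · rintro _ ⟨c, hc, rfl⟩
    exact eval_mem_span_rows (fun v => (hGen v).1) hc (βc i)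
  · refine (span_rows_le_dotOrthogonal_ker _).trans (dotOrthogonal_anti ?_)
    exact hVΩ ▸ Set.biInter_subset_of_mem hi

theorem constituents_dominate_eigencode
    {Fq F : Type*} [Field Fq] [Fintype Fq] [Field F] [Algebra Fq F]
    (m ℓ : ℕ) [NeZero m] (hcop : Nat.Coprime m (Fintype.card Fq))
    (lam : Fq) (hlam : lam ≠ 0)
    (hsplit : IsSplittingField Fq F (X ^ m - C lam))
    (𝓒 : Submodule Fq (ZMod m × Fin ℓ → Fq))
    (hQT : ∀ c ∈ 𝓒, rho m ℓ lam c ∈ 𝓒)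
    (G : Matrix (Fin ℓ) (Fin ℓ) (Polynomial Fq))
    (htri : ∀ i j, j < i → G i j = 0)
    (hdiv : ∀ j, G j j ∣ X ^ m - C lam)
    (hGen : ∀ v : Fin ℓ → Polynomial Fq,
      arrOf m ℓ lam v ∈ 𝓒 ↔ v ∈ Submodule.span (Polynomial Fq) (Set.range fun i j => G i j))
    (s : ℕ) (f : Fin s → Polynomial Fq)
    (hmon : ∀ i, (f i).Monic) (hirr : ∀ i, Irreducible (f i))
    (hfinj : Function.Injective f)
    (hprod : ∏ i, f i = X ^ m - C lam)
    (βc : Fin s → F) (hβc : ∀ i, Polynomial.aeval (βc i) (f i) = 0)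
    (Ωbar : Set F)
    (hΩbar : Ωbar = {x : F | x ^ m = algebraMap Fq F lam ∧ Polynomial.aeval x G.det = 0})
    (hne : Ωbar.Nonempty)
    (VΩ : Set (Fin ℓ → F)) (hVΩ : VΩ = ⋂ β ∈ Ωbar, Vspace ℓ G β)
    (dualV : Set (Fin ℓ → F)) (hdual : dualV = {v | ∀ w ∈ VΩ, ∑ j, w j * v j = 0})
    (i : Fin s) (hi : βc i ∈ Ωbar)
    (Cbar : Set (Fin ℓ → F))
    (hCbar : Cbar =
      ↑(Submodule.span F (Set.range fun a => (G.map fun p => Polynomial.aeval (βc i) p) a)))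
    (Ci : Set (Fin ℓ → F))
    (hCi : Ci = {w | ∃ c ∈ 𝓒, w = fun j => ∑ k : ZMod m, algebraMap Fq F (c (k, j)) * βc i ^ k.val}) :
    minDist Cbar ≤ minDist Ci ∧
    minDist dualV ≤ minDist Cbar ∧
    minDist dualV = minDist {u : Fin ℓ → Fq | (fun j => algebraMap Fq F (u j)) ∈ dualV} ∧
    minDist {u : Fin ℓ → Fq | (fun j => algebraMap Fq F (u j)) ∈ dualV} =
      minDist (eigencode (Fq := Fq) ℓ VΩ) :=
  constituents_dominate_eigencode_general m ℓ lam hsplit 𝓒 G hGen s βc Ωbar hΩbar VΩ hVΩ dualV hdual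
    i hi Cbar hCbar Ci hCi
end

section
/- Rows of codewords lie in the eigencode: Let C ⊆ F_q^{mℓ} be a λ-QT code of index ℓ and co-index m whose eigenvalue set equals all of Ω, and let ℂ_Ω = ℂ(∩_{β∈Ω} V_β) be the eigencode of the common eigenspace of all eigenvalues. Let B ⊆ F_q^ℓ be the F_q-linear span of all rows c_k = (c_{k,0},…,c_{k,ℓ−1}), 0 ≤ k ≤ m−1, of all codewords c ∈ C viewed as m×ℓ arrays. Then B ⊆ ℂ_Ω. -/
open Polynomial

/-!
Pair the row `c_k` of a codeword with `w ∈ ⋂_β V_β`. Writing `c_j(x) = ∑_k c_{k,j} xᵏ` for the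
column polynomials, the pairings are the coefficients of `P = ∑_j w_j c_j(x)`, a polynomial of
degree `< m`. The vector `(c_j(x))_j` lies in the row span of `G̃`, so `P(β) = w ⬝ c(β)` is a
combination of the entries of `G̃(β) w = 0` for every root `β` of `xᵐ - λ`. These `m` roots are
distinct because `m` is prime to `q`, hence `P = 0`.
-/

open scoped Matrix

section PolyOfCoeffs

variable {R : Type*} [Semiring R] {m : ℕ} [NeZero m]

noncomputable def polyOfCoeffs (f : ZMod m → R) : R[X] :=
  ∑ i : ZMod m, C (f i) * X ^ i.val

theorem coeff_polyOfCoeffs_val (f : ZMod m → R) (k : ZMod m) :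
    (polyOfCoeffs f).coeff k.val = f k := by
  rw [polyOfCoeffs, finsetSum_coeff, Finset.sum_eq_single k]
  · simp
  · intro i _ hik
    rw [coeff_C_mul_X_pow, if_neg fun h => hik (ZMod.val_injective m h.symm)]
  · simp

theorem degree_polyOfCoeffs_lt (f : ZMod m → R) : (polyOfCoeffs f).degree < m := by
  refine (degree_sum_le _ _).trans_lt ((Finset.sup_lt_iff (WithBot.bot_lt_coe m)).2 ?_)
  intro i _
  exact (degree_C_mul_X_pow_le _ _).trans_lt (WithBot.coe_lt_coe.2 (ZMod.val_lt i))

end PolyOfCoeffs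

theorem arrOf_polyOfCoeffs {Fq : Type*} [Field Fq] {m ℓ : ℕ} [NeZero m] (lam : Fq)
    (c : ZMod m × Fin ℓ → Fq) :
    arrOf m ℓ lam (fun j => polyOfCoeffs fun i => c (i, j)) = c := by
  funext ⟨k, j⟩
  have hdeg : (polyOfCoeffs fun i => c (i, j)).degree < (X ^ m - C lam).degree := by
    rw [degree_X_pow_sub_C (Nat.pos_of_ne_zero (NeZero.ne m))]
    exact degree_polyOfCoeffs_lt _
  rw [arrOf, (modByMonic_eq_self_iff (monic_X_pow_sub_C lam (NeZero.ne m))).2 hdeg,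
    coeff_polyOfCoeffs_val]

theorem FiniteField.natCast_ne_zero_of_coprime_card {K : Type*} [Field K] [Fintype K] {m : ℕ}
    (h : Nat.Coprime m (Fintype.card K)) : (m : K) ≠ 0 := by
  have := (Nat.isCoprime_iff_coprime.2 h).map (Int.castRingHom K)
  simp only [eq_intCast, Int.cast_natCast, FiniteField.cast_card_eq_zero,
    isCoprime_zero_right] at this
  exact this.ne_zero

section RootsOfXPowSubC

variable {K L : Type*} [Field K] [Field L] [Algebra K L] {m : ℕ} {a : K}

theorem mem_rootSet_X_pow_sub_C (hm : m ≠ 0) {x : L} :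
    x ∈ (X ^ m - C a).rootSet L ↔ x ^ m = algebraMap K L a := by
  simp [mem_rootSet_of_ne (X_pow_sub_C_ne_zero (Nat.pos_of_ne_zero hm) a), sub_eq_zero]

theorem card_rootSet_X_pow_sub_C (hm : (m : K) ≠ 0) (ha : a ≠ 0)
    (hsplit : Splits ((X ^ m - C a).map (algebraMap K L))) :
    Fintype.card ((X ^ m - C a).rootSet L) = m := by
  rw [card_rootSet_eq_natDegree (separable_X_pow_sub_C a hm ha) hsplit, natDegree_X_pow_sub_C]

theorem eq_zero_of_degree_lt_of_eval_pow_eq (hm : (m : K) ≠ 0) (ha : a ≠ 0)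
    (hsplit : Splits ((X ^ m - C a).map (algebraMap K L))) {q : L[X]} (hq : q.degree < m)
    (heval : ∀ x : L, x ^ m = algebraMap K L a → q.eval x = 0) : q = 0 := by
  have hm₀ : m ≠ 0 := by rintro rfl; exact hm Nat.cast_zero
  refine eq_zero_of_degree_lt_of_eval_finset_eq_zero ((X ^ m - C a).rootSet L).toFinset ?_ ?_
  · rwa [Set.toFinset_card, card_rootSet_X_pow_sub_C hm ha hsplit]
  · intro x hx
    exact heval x ((mem_rootSet_X_pow_sub_C hm₀).1 (Set.mem_toFinset.1 hx))

end RootsOfXPowSubC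

theorem dotProduct_aeval_eq_zero_of_mem_span {R A ι : Type*} [CommRing R] [CommRing A]
    [Algebra R A] [Fintype ι] {G : Matrix ι ι R[X]} {v : ι → R[X]}
    (hv : v ∈ Submodule.span R[X] (Set.range G)) {β : A} {w : ι → A}
    (hw : (G.map fun p => aeval β p) *ᵥ w = 0) :
    w ⬝ᵥ (fun j => aeval β (v j)) = 0 := by
  obtain ⟨p, rfl⟩ := (Submodule.mem_span_range_iff_exists_fun R[X]).1 hv
  have : (fun j => aeval β ((∑ i, p i • G i) j)) =
      (fun i => aeval β (p i)) ᵥ* G.map fun p => aeval β p := by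
    funext j
    rw [← Matrix.vecMul_eq_sum]
    exact RingHom.map_vecMul (aeval β).toRingHom G p j
  rw [this, dotProduct_comm, ← Matrix.dotProduct_mulVec, hw, dotProduct_zero]

def eigencodeSubmodule {Fq F : Type*} [Field Fq] [Field F] [Algebra Fq F] (ℓ : ℕ)
    (V : Set (Fin ℓ → F)) : Submodule Fq (Fin ℓ → Fq) where
  carrier := eigencode ℓ V
  add_mem' {a b} ha hb v hv := by
    simp [mul_add, Finset.sum_add_distrib, ha v hv, hb v hv]
  zero_mem' v _ := by simp
  smul_mem' r a ha v hv := by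
    simp [mul_left_comm _ (algebraMap Fq F r), ← Finset.mul_sum, ha v hv]

theorem row_mem_eigencode {Fq F : Type*} [Field Fq] [Fintype Fq] [Field F] [Algebra Fq F]
    {m ℓ : ℕ} [NeZero m] (hcop : Nat.Coprime m (Fintype.card Fq)) {lam : Fq} (hlam : lam ≠ 0)
    (hsplit : Splits ((X ^ m - C lam).map (algebraMap Fq F)))
    {𝓒 : Submodule Fq (ZMod m × Fin ℓ → Fq)} {G : Matrix (Fin ℓ) (Fin ℓ) Fq[X]}
    (hGen : ∀ v : Fin ℓ → Fq[X],
      arrOf m ℓ lam v ∈ 𝓒 ↔ v ∈ Submodule.span Fq[X] (Set.range fun i j => G i j))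
    {c : ZMod m × Fin ℓ → Fq} (hc : c ∈ 𝓒) (k : ZMod m) :
    (fun j => c (k, j)) ∈
      eigencode ℓ (⋂ β ∈ {x : F | x ^ m = algebraMap Fq F lam}, Vspace ℓ G β) := by
  intro w hw
  rw [Set.mem_iInter₂] at hw
  set v : Fin ℓ → Fq[X] := fun j => polyOfCoeffs fun i => c (i, j)
  have hv : v ∈ Submodule.span Fq[X] (Set.range G) := (hGen v).1 (by rwa [arrOf_polyOfCoeffs])
  set P : F[X] := polyOfCoeffs fun i => ∑ j, w j * algebraMap Fq F (c (i, j))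
  have hP : P = 0 := by
    refine eq_zero_of_degree_lt_of_eval_pow_eq (FiniteField.natCast_ne_zero_of_coprime_card hcop)
      hlam hsplit (degree_polyOfCoeffs_lt _) fun β hβ => ?_
    have hevalP : P.eval β = w ⬝ᵥ (fun j => aeval β (v j)) := by
      simp only [P, v, polyOfCoeffs, eval_finsetSum, map_sum, dotProduct, Finset.mul_sum,
        Finset.sum_mul, eval_mul, eval_C, eval_pow, eval_X, map_mul, aeval_C, map_pow, aeval_X]
      rw [Finset.sum_comm]
      simp only [mul_assoc]
    rw [hevalP]
    exact dotProduct_aeval_eq_zero_of_mem_span hv (hw β hβ)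
  rw [← coeff_polyOfCoeffs_val (fun i => ∑ j, w j * algebraMap Fq F (c (i, j))) k]
  exact congrArg (coeff · k.val) hP

theorem rows_lie_in_eigencode_general
    {Fq F : Type*} [Field Fq] [Fintype Fq] [Field F] [Algebra Fq F]
    (m ℓ : ℕ) [NeZero m] (hcop : Nat.Coprime m (Fintype.card Fq))
    (lam : Fq) (hlam : lam ≠ 0)
    (hsplit : IsSplittingField Fq F (X ^ m - C lam))
    (𝓒 : Submodule Fq (ZMod m × Fin ℓ → Fq))
    (G : Matrix (Fin ℓ) (Fin ℓ) (Polynomial Fq))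
    (hGen : ∀ v : Fin ℓ → Polynomial Fq,
      arrOf m ℓ lam v ∈ 𝓒 ↔ v ∈ Submodule.span (Polynomial Fq) (Set.range fun i j => G i j))
    (VΩ : Set (Fin ℓ → F))
    (hVΩ : VΩ = ⋂ β ∈ {x : F | x ^ m = algebraMap Fq F lam}, Vspace ℓ G β)
    (B : Submodule Fq (Fin ℓ → Fq))
    (hB : B = Submodule.span Fq {u | ∃ c ∈ 𝓒, ∃ k : ZMod m, u = fun j => c (k, j)}) :
    (B : Set (Fin ℓ → Fq)) ⊆ eigencode ℓ VΩ := by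
  subst hB hVΩ
  show _ ≤ eigencodeSubmodule ℓ _
  rw [Submodule.span_le]
  rintro _ ⟨c, hc, k, rfl⟩
  exact row_mem_eigencode hcop hlam hsplit.splits' hGen hc k

theorem rows_lie_in_eigencode
    {Fq F : Type*} [Field Fq] [Fintype Fq] [Field F] [Algebra Fq F]
    (m ℓ : ℕ) [NeZero m] (hcop : Nat.Coprime m (Fintype.card Fq))
    (lam : Fq) (hlam : lam ≠ 0)
    (hsplit : IsSplittingField Fq F (X ^ m - C lam))
    (𝓒 : Submodule Fq (ZMod m × Fin ℓ → Fq))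
    (hQT : ∀ c ∈ 𝓒, rho m ℓ lam c ∈ 𝓒)
    (G : Matrix (Fin ℓ) (Fin ℓ) (Polynomial Fq))
    (htri : ∀ i j, j < i → G i j = 0)
    (hdiv : ∀ j, G j j ∣ X ^ m - C lam)
    (hGen : ∀ v : Fin ℓ → Polynomial Fq,
      arrOf m ℓ lam v ∈ 𝓒 ↔ v ∈ Submodule.span (Polynomial Fq) (Set.range fun i j => G i j))
    (hall : ∀ x : F, x ^ m = algebraMap Fq F lam → Polynomial.aeval x G.det = 0)
    (VΩ : Set (Fin ℓ → F))
    (hVΩ : VΩ = ⋂ β ∈ {x : F | x ^ m = algebraMap Fq F lam}, Vspace ℓ G β)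
    (B : Submodule Fq (Fin ℓ → Fq))
    (hB : B = Submodule.span Fq {u | ∃ c ∈ 𝓒, ∃ k : ZMod m, u = fun j => c (k, j)}) :
    (B : Set (Fin ℓ → Fq)) ⊆ eigencode ℓ VΩ :=
  rows_lie_in_eigencode_general m ℓ hcop lam hlam hsplit 𝓒 G hGen VΩ hVΩ B hB
end
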